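/- arXiv:1502.01359 — 3 statements merged into one kernel-verified Lean document; each statement's English description precedes it below -/
import Mathlib

section
/- (Markov chains induced by interactive encoding of three nodes, items 1–3.) For every t ∈ {1,…,n} and l ∈ {1,…,K}: (1) (J_x^1, J_y^1, X_{[1:t-1]}, X_{[t+1:n]}, Y_{[t+1:n]}, Z_{[1:t-1]}) −∘− (X_t, Y_t) −∘− Z_t; (2) (J_x^l, J_y^l, Y_{[1:t-1]}) −∘− (J_x^{[1:l-1]}, J_y^{[1:l-1]}, J_z^{[1:l-1]}, X^n, Y_{[t:n]}, Z_{[1:t-1]}) −∘− Z_t; and (3) (J_z^l, Z_{[t+1:n]}) −∘− (J_x^{[1:l]}, J_y^{[1:l]}, J_z^{[1:l-1]}, X^n, Y_{[t+1:n]}, Z_{[1:t]}) −∘− Y_t. -/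
noncomputable section

namespace IT

variable {Ω : Type*} [Fintype Ω]

open Classical in
/-- Probability of an event under a weight function on a finite sample space. -/
def pr (w : Ω → ℝ) (E : Ω → Prop) : ℝ := ∑ ω, if E ω then w ω else 0

open Classical in
/-- The distribution (pmf) of a random variable. -/
def dist (w : Ω → ℝ) {α : Type*} [Fintype α] (X : Ω → α) (a : α) : ℝ :=
  ∑ ω, if X ω = a then w ω else 0

/-- Shannon entropy (base 2). -/
def H (w : Ω → ℝ) {α : Type*} [Fintype α] (X : Ω → α) : ℝ :=
  -∑ a, dist w X a * Real.logb 2 (dist w X a)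

/-- Conditional entropy H(X|Y). -/
def condH (w : Ω → ℝ) {α β : Type*} [Fintype α] [Fintype β] (X : Ω → α) (Y : Ω → β) : ℝ :=
  H w (fun ω => (X ω, Y ω)) - H w Y

/-- Mutual information I(X;Y). -/
def mutInfo (w : Ω → ℝ) {α β : Type*} [Fintype α] [Fintype β] (X : Ω → α) (Y : Ω → β) : ℝ :=
  H w X + H w Y - H w (fun ω => (X ω, Y ω))

/-- Conditional mutual information I(X;Y|Z). -/
def condMutInfo (w : Ω → ℝ) {α β γ : Type*} [Fintype α] [Fintype β] [Fintype γ]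
    (X : Ω → α) (Y : Ω → β) (Z : Ω → γ) : ℝ :=
  condH w X Z - condH w X (fun ω => (Y ω, Z ω))

/-- Expectation of a real random variable. -/
def expect (w : Ω → ℝ) (f : Ω → ℝ) : ℝ := ∑ ω, w ω * f ω

end IT

/-- `p` is a probability mass function on a finite type. -/
def IsPMF {α : Type*} [Fintype α] (p : α → ℝ) : Prop := (∀ a, 0 ≤ p a) ∧ ∑ a, p a = 1

/-- The i.i.d. (product) weight on `n`-sequences induced by a single-letter pmf. -/
def iidW {α : Type*} (p : α → ℝ) (n : ℕ) : (Fin n → α) → ℝ := fun x => ∏ t, p (x t)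

/-- The first `l` components of a dependent tuple (the rest masked). -/
def trunc {K : ℕ} {γ : Fin K → Type*} (l : ℕ) (f : (k : Fin K) → γ k) :
    (k : Fin K) → Option (γ k) :=
  fun k => if k.val < l then some (f k) else none

/-- Coordinates with (0-based) index `< t`. -/
def below {n : ℕ} {α : Type*} (t : ℕ) (x : Fin n → α) : Fin n → Option α :=
  fun s => if s.val < t then some (x s) else none

/-- Coordinates with (0-based) index `> t`. -/
def above {n : ℕ} {α : Type*} (t : ℕ) (x : Fin n → α) : Fin n → Option α :=
  fun s => if t < s.val then some (x s) else none

/-- Coordinates with (0-based) index `≥ t`. -/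
def fromIdx {n : ℕ} {α : Type*} (t : ℕ) (x : Fin n → α) : Fin n → Option α :=
  fun s => if t ≤ s.val then some (x s) else none

open Classical in
/-- Number of occurrences of `a` in the sequence `x`. -/
def Nocc {n : ℕ} {α : Type*} (a : α) (x : Fin n → α) : ℕ :=
  (Finset.univ.filter fun t => x t = a).card

/-- Strongly typical set. -/
def typical {α : Type*} [Fintype α] (Q : α → ℝ) (δ : ℝ) (n : ℕ) : Set (Fin n → α) :=
  {x | ∀ a, Q a ≠ 0 → |(Nocc a x : ℝ) / n - Q a| ≤ δ / Fintype.card α}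


namespace ThreeNodeAux

open IT

variable {Ω : Type*} [Fintype Ω]

open Classical

lemma dist_eq_pr {w : Ω → ℝ} {α : Type*} [Fintype α] (X : Ω → α) (a : α) :
    dist w X a = pr w (fun ω => X ω = a) := rfl

lemma iteP_congr {c d : Prop} (h : c ↔ d) (x y : ℝ) :
    (if c then x else y) = (if d then x else y) := by
  by_cases hc : c
  · rw [if_pos hc, if_pos (h.mp hc)]
  · rw [if_neg hc, if_neg (fun hd => hc (h.mpr hd))]

lemma iteP_neg {c : Prop} (h : ¬ c) (x y : ℝ) : (if c then x else y) = y := by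
  rw [if_neg h]

lemma pr_congr {w : Ω → ℝ} {E E' : Ω → Prop} (h : ∀ ω, E ω ↔ E' ω) :
    pr w E = pr w E' := by
  unfold IT.pr
  exact Finset.sum_congr rfl fun ω _ => if_congr (h ω) rfl rfl

lemma dist_of_iff {w : Ω → ℝ} {α β : Type*} [Fintype α] [Fintype β]
    (X : Ω → α) (Y : Ω → β) (a : α) (b : β) (h : ∀ ω, X ω = a ↔ Y ω = b) :
    dist w X a = dist w Y b := by
  rw [dist_eq_pr, dist_eq_pr]; exact pr_congr h

lemma dist_nonneg' {w : Ω → ℝ} (hw : ∀ ω, 0 ≤ w ω) {α : Type*} [Fintype α]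
    (X : Ω → α) (a : α) : 0 ≤ dist w X a := by
  unfold IT.dist
  exact Finset.sum_nonneg fun ω _ => by split <;> simp [hw ω]

lemma pr_comp {w : Ω → ℝ} {τ : Type*} [Fintype τ] (T : Ω → τ) (P : τ → Prop) :
    pr w (fun ω => P (T ω)) = ∑ x, if P x then dist w T x else 0 := by
  unfold IT.pr IT.dist
  have : ∀ x : τ, (if P x then ∑ ω, if T ω = x then w ω else 0 else 0)
      = ∑ ω, if T ω = x ∧ P x then w ω else 0 := by
    intro x
    by_cases hP : P x
    · rw [if_pos hP]
      exact Finset.sum_congr rfl fun ω _ => if_congr (by simp [hP]) rfl rfl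
    · simp [hP]
  rw [Finset.sum_congr rfl fun x _ => this x, Finset.sum_comm]
  refine Finset.sum_congr rfl fun ω _ => ?_
  rw [Finset.sum_congr rfl fun x _ => ite_and (T ω = x) (P x) (w ω) 0]
  simp

end ThreeNodeAux
namespace ThreeNodeAux

open IT

variable {Ω : Type*} [Fintype Ω]

open Classical

lemma H_comp {w : Ω → ℝ} {τ σ : Type*} [Fintype τ] [Fintype σ] (T : Ω → τ) (g : τ → σ) :
    H w (fun ω => g (T ω))
      = -∑ x, dist w T x * Real.logb 2 (dist w (fun ω => g (T ω)) (g x)) := by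
  unfold IT.H
  congr 1
  have hd : ∀ y, dist w (fun ω => g (T ω)) y = ∑ x, if g x = y then dist w T x else 0 :=
    fun y => pr_comp T (fun x => g x = y)
  calc
    ∑ y, dist w (fun ω => g (T ω)) y * Real.logb 2 (dist w (fun ω => g (T ω)) y)
        = ∑ y, ∑ x, (if g x = y then
            dist w T x * Real.logb 2 (dist w (fun ω => g (T ω)) y) else 0) := by
          refine Finset.sum_congr rfl fun y _ => ?_
          rw [hd y, Finset.sum_mul]
          exact Finset.sum_congr rfl fun x _ => by split <;> simp
    _ = ∑ x, ∑ y, (if g x = y then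
            dist w T x * Real.logb 2 (dist w (fun ω => g (T ω)) y) else 0) :=
          Finset.sum_comm
    _ = ∑ x, dist w T x * Real.logb 2 (dist w (fun ω => g (T ω)) (g x)) := by
          refine Finset.sum_congr rfl fun x _ => ?_
          simp

lemma sum_dist_fst {w : Ω → ℝ} {α β : Type*} [Fintype α] [Fintype β]
    (X : Ω → α) (Y : Ω → β) (b : β) :
    ∑ a, dist w (fun ω => (X ω, Y ω)) (a, b) = dist w Y b := by
  unfold IT.dist
  rw [Finset.sum_comm]
  refine Finset.sum_congr rfl fun ω _ => ?_
  beta_reduce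
  by_cases h2 : Y ω = b <;> simp [Prod.ext_iff, h2]

lemma sum_dist_snd {w : Ω → ℝ} {α β : Type*} [Fintype α] [Fintype β]
    (X : Ω → α) (Y : Ω → β) (a : α) :
    ∑ b, dist w (fun ω => (X ω, Y ω)) (a, b) = dist w X a := by
  unfold IT.dist
  rw [Finset.sum_comm]
  refine Finset.sum_congr rfl fun ω _ => ?_
  beta_reduce
  by_cases h1 : X ω = a <;> simp [Prod.ext_iff, h1]

-- marginals for a triple variable
lemma sum_dist_mid {w : Ω → ℝ} {α β γ : Type*} [Fintype α] [Fintype β] [Fintype γ]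
    (X : Ω → α) (Y : Ω → β) (Z : Ω → γ) (a : α) (c : γ) :
    ∑ b, dist w (fun ω => (X ω, Y ω, Z ω)) (a, b, c)
      = dist w (fun ω => (X ω, Z ω)) (a, c) := by
  unfold IT.dist
  rw [Finset.sum_comm]
  refine Finset.sum_congr rfl fun ω _ => ?_
  beta_reduce
  by_cases h1 : X ω = a <;> by_cases h3 : Z ω = c <;> simp [Prod.ext_iff, h1, h3]

end ThreeNodeAux
namespace ThreeNodeAux

open IT

variable {Ω : Type*} [Fintype Ω]

open Classical

lemma cmi_zero_of_factor {w : Ω → ℝ} (hw : ∀ ω, 0 ≤ w ω)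
    {α β γ : Type*} [Fintype α] [Fintype β] [Fintype γ]
    (A : Ω → α) (B : Ω → β) (C : Ω → γ)
    (hfac : ∀ a b c, dist w (fun ω => (A ω, B ω, C ω)) (a, b, c) * dist w C c
      = dist w (fun ω => (A ω, C ω)) (a, c) * dist w (fun ω => (B ω, C ω)) (b, c)) :
    condMutInfo w A B C = 0 := by
  set T : Ω → α × β × γ := fun ω => (A ω, B ω, C ω) with hT
  have e1 : H w (fun ω => (A ω, C ω))
      = -∑ x, dist w T x * Real.logb 2 (dist w (fun ω => (A ω, C ω)) (x.1, x.2.2)) :=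
    H_comp T (fun x => (x.1, x.2.2))
  have e2 : H w C
      = -∑ x, dist w T x * Real.logb 2 (dist w C x.2.2) :=
    H_comp T (fun x => x.2.2)
  have e3 : H w (fun ω => (A ω, (B ω, C ω)))
      = -∑ x, dist w T x * Real.logb 2
          (dist w (fun ω => (A ω, (B ω, C ω))) (x.1, (x.2.1, x.2.2))) :=
    H_comp T (fun x => (x.1, (x.2.1, x.2.2)))
  have e4 : H w (fun ω => (B ω, C ω))
      = -∑ x, dist w T x * Real.logb 2 (dist w (fun ω => (B ω, C ω)) (x.2.1, x.2.2)) :=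
    H_comp T (fun x => (x.2.1, x.2.2))
  have h5 : ∀ x : α × β × γ,
      dist w (fun ω => (A ω, (B ω, C ω))) (x.1, (x.2.1, x.2.2)) = dist w T x := by
    intro x
    refine dist_of_iff _ _ _ _ fun ω => ?_
    simp [Prod.ext_iff, hT]
  have key : ∀ x : α × β × γ,
      dist w T x * Real.logb 2 (dist w (fun ω => (A ω, C ω)) (x.1, x.2.2))
        + dist w T x * Real.logb 2 (dist w (fun ω => (B ω, C ω)) (x.2.1, x.2.2))
      = dist w T x * Real.logb 2 (dist w C x.2.2)
        + dist w T x * Real.logb 2 (dist w T x) := by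
    rintro ⟨a, b, c⟩
    by_cases hq : dist w T (a, b, c) = 0
    · simp [hq]
    have hq0 : 0 ≤ dist w T (a, b, c) := dist_nonneg' hw T _
    have hqpos : 0 < dist w T (a, b, c) := lt_of_le_of_ne hq0 (Ne.symm hq)
    have hAC : dist w T (a, b, c) ≤ dist w (fun ω => (A ω, C ω)) (a, c) := by
      rw [← sum_dist_mid A B C a c]
      exact Finset.single_le_sum (f := fun b' => dist w (fun ω => (A ω, B ω, C ω)) (a, b', c))
        (fun b' _ => dist_nonneg' hw _ _) (Finset.mem_univ b)
    have hBC : dist w T (a, b, c) ≤ dist w (fun ω => (B ω, C ω)) (b, c) := by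
      rw [show dist w (fun ω => (B ω, C ω)) (b, c)
          = ∑ a', dist w T (a', b, c) from (sum_dist_fst A (fun ω => (B ω, C ω)) (b, c)).symm]
      exact Finset.single_le_sum (f := fun a' => dist w T (a', b, c))
        (fun a' _ => dist_nonneg' hw _ _) (Finset.mem_univ a)
    have hC : dist w T (a, b, c) ≤ dist w C c := by
      have h1 : ∑ a', dist w (fun ω => (A ω, C ω)) (a', c) = dist w C c :=
        sum_dist_fst A C c
      have h2 : dist w (fun ω => (A ω, C ω)) (a, c) ≤ dist w C c := by
        rw [← h1]
        exact Finset.single_le_sum (f := fun a' => dist w (fun ω => (A ω, C ω)) (a', c))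
          (fun a' _ => dist_nonneg' hw _ _) (Finset.mem_univ a)
      exact le_trans hAC h2
    have hACpos : 0 < dist w (fun ω => (A ω, C ω)) (a, c) := lt_of_lt_of_le hqpos hAC
    have hBCpos : 0 < dist w (fun ω => (B ω, C ω)) (b, c) := lt_of_lt_of_le hqpos hBC
    have hCpos : 0 < dist w C c := lt_of_lt_of_le hqpos hC
    have hlog : Real.logb 2 (dist w T (a, b, c) * dist w C c)
        = Real.logb 2 (dist w (fun ω => (A ω, C ω)) (a, c)
          * dist w (fun ω => (B ω, C ω)) (b, c)) := by
      rw [hfac a b c]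
    rw [Real.logb_mul (ne_of_gt hqpos) (ne_of_gt hCpos),
        Real.logb_mul (ne_of_gt hACpos) (ne_of_gt hBCpos)] at hlog
    have : Real.logb 2 (dist w (fun ω => (A ω, C ω)) (a, c))
        + Real.logb 2 (dist w (fun ω => (B ω, C ω)) (b, c))
        = Real.logb 2 (dist w C c) + Real.logb 2 (dist w T (a, b, c)) := by linarith
    calc dist w T (a, b, c) * Real.logb 2 (dist w (fun ω => (A ω, C ω)) (a, c))
          + dist w T (a, b, c) * Real.logb 2 (dist w (fun ω => (B ω, C ω)) (b, c))
        = dist w T (a, b, c) * (Real.logb 2 (dist w (fun ω => (A ω, C ω)) (a, c))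
          + Real.logb 2 (dist w (fun ω => (B ω, C ω)) (b, c))) := by ring
      _ = dist w T (a, b, c) * (Real.logb 2 (dist w C c)
          + Real.logb 2 (dist w T (a, b, c))) := by rw [this]
      _ = _ := by ring
  have hsum : ∑ x, (dist w T x * Real.logb 2 (dist w (fun ω => (A ω, C ω)) (x.1, x.2.2))
        + dist w T x * Real.logb 2 (dist w (fun ω => (B ω, C ω)) (x.2.1, x.2.2)))
      = ∑ x, (dist w T x * Real.logb 2 (dist w C x.2.2)
        + dist w T x * Real.logb 2 (dist w T x)) :=
    Finset.sum_congr rfl fun x _ => key x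
  rw [Finset.sum_add_distrib, Finset.sum_add_distrib] at hsum
  unfold IT.condMutInfo IT.condH
  rw [e1, e2, e3, e4]
  have h5s : ∑ x, dist w T x * Real.logb 2
      (dist w (fun ω => (A ω, (B ω, C ω))) (x.1, (x.2.1, x.2.2)))
      = ∑ x, dist w T x * Real.logb 2 (dist w T x) :=
    Finset.sum_congr rfl fun x _ => by rw [h5 x]
  rw [h5s]
  linarith

end ThreeNodeAux
namespace ThreeNodeAux

open IT

variable {Ω : Type*} [Fintype Ω]

open Classical

lemma pr_rect {w : Ω → ℝ} (hw : ∀ ω, 0 ≤ w ω)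
    {𝒰 𝒱 𝒲 : Type*} [Fintype 𝒰] [Fintype 𝒱] [Fintype 𝒲]
    (U : Ω → 𝒰) (V : Ω → 𝒱) (W : Ω → 𝒲) (w₀ : 𝒲)
    (hUVW : ∀ u v, dist w (fun ω => (U ω, V ω, W ω)) (u, v, w₀)
        * (∑ u', ∑ v', dist w (fun ω => (U ω, V ω, W ω)) (u', v', w₀))
      = (∑ v', dist w (fun ω => (U ω, V ω, W ω)) (u, v', w₀))
        * (∑ u', dist w (fun ω => (U ω, V ω, W ω)) (u', v, w₀)))
    (P1 P2 : 𝒰 → Prop) (Q1 Q2 : 𝒱 → Prop) :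
    pr w (fun ω => P1 (U ω) ∧ Q1 (V ω) ∧ W ω = w₀)
      * pr w (fun ω => P2 (U ω) ∧ Q2 (V ω) ∧ W ω = w₀)
    = pr w (fun ω => P1 (U ω) ∧ Q2 (V ω) ∧ W ω = w₀)
      * pr w (fun ω => P2 (U ω) ∧ Q1 (V ω) ∧ W ω = w₀) := by
  set T : Ω → 𝒰 × 𝒱 × 𝒲 := fun ω => (U ω, V ω, W ω) with hT
  have hprs : ∀ (P : 𝒰 → Prop) (Q : 𝒱 → Prop),
      pr w (fun ω => P (U ω) ∧ Q (V ω) ∧ W ω = w₀)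
      = ∑ u, ∑ v, (if P u ∧ Q v then dist w T (u, v, w₀) else 0) := by
    intro P Q
    have h0 := pr_comp (w := w) T (fun x => P x.1 ∧ Q x.2.1 ∧ x.2.2 = w₀)
    rw [show (fun ω => P (U ω) ∧ Q (V ω) ∧ W ω = w₀)
        = fun ω => (fun x : 𝒰 × 𝒱 × 𝒲 => P x.1 ∧ Q x.2.1 ∧ x.2.2 = w₀) (T ω) from rfl]
    rw [h0, Fintype.sum_prod_type]
    refine Finset.sum_congr rfl fun u _ => ?_
    rw [Fintype.sum_prod_type]
    refine Finset.sum_congr rfl fun v _ => ?_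
    by_cases hP : P u <;> by_cases hQ : Q v <;> simp [hP, hQ]
  rw [hprs P1 Q1, hprs P2 Q2, hprs P1 Q2, hprs P2 Q1]
  have hmul : ∀ (P : 𝒰 → Prop) (Q : 𝒱 → Prop),
      (∑ u, ∑ v, (if P u ∧ Q v then dist w T (u, v, w₀) else 0))
        * (∑ u', ∑ v', dist w T (u', v', w₀))
      = (∑ u, if P u then (∑ v', dist w T (u, v', w₀)) else 0)
        * (∑ v, if Q v then (∑ u', dist w T (u', v, w₀)) else 0) := by
    intro P Q
    rw [Finset.sum_mul]
    rw [Finset.sum_mul]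
    refine Finset.sum_congr rfl fun u _ => ?_
    by_cases hP : P u
    · rw [if_pos hP, Finset.sum_mul, Finset.mul_sum]
      refine Finset.sum_congr rfl fun v _ => ?_
      by_cases hQ : Q v
      · rw [if_pos (⟨hP, hQ⟩ : P u ∧ Q v), if_pos hQ]
        exact hUVW u v
      · rw [if_neg (fun hc : P u ∧ Q v => hQ hc.2), if_neg hQ]
        ring
    · rw [if_neg hP]
      have hzz : (∑ v, if P u ∧ Q v then dist w T (u, v, w₀) else 0) = 0 :=
        Finset.sum_eq_zero fun v _ => if_neg (fun hc : P u ∧ Q v => hP hc.1)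
      rw [hzz]
      ring
  by_cases hDz : (∑ u', ∑ v', dist w T (u', v', w₀)) = 0
  · have hq0 : ∀ u v, dist w T (u, v, w₀) = 0 := by
      intro u v
      have hnn : ∀ u' v', 0 ≤ dist w T (u', v', w₀) := fun u' v' => dist_nonneg' hw _ _
      have houter : ∀ u' ∈ Finset.univ, (0:ℝ) ≤ ∑ v', dist w T (u', v', w₀) :=
        fun u' _ => Finset.sum_nonneg fun v' _ => hnn u' v'
      have h1 : ∑ v', dist w T (u, v', w₀) = 0 :=
        (Finset.sum_eq_zero_iff_of_nonneg houter).mp hDz u (Finset.mem_univ u)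
      exact (Finset.sum_eq_zero_iff_of_nonneg fun v' _ => hnn u v').mp h1 v (Finset.mem_univ v)
    have hz : ∀ (P : 𝒰 → Prop) (Q : 𝒱 → Prop),
        (∑ u, ∑ v, (if P u ∧ Q v then dist w T (u, v, w₀) else 0)) = 0 := by
      intro P Q
      refine Finset.sum_eq_zero fun u _ => Finset.sum_eq_zero fun v _ => ?_
      rw [hq0 u v]
      split <;> rfl
    rw [hz P1 Q1, hz P2 Q2, hz P1 Q2, hz P2 Q1]
  · refine mul_right_cancel₀ (mul_ne_zero hDz hDz) ?_
    calc (∑ u, ∑ v, (if P1 u ∧ Q1 v then dist w T (u, v, w₀) else 0))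
          * (∑ u, ∑ v, (if P2 u ∧ Q2 v then dist w T (u, v, w₀) else 0))
          * ((∑ u', ∑ v', dist w T (u', v', w₀)) * (∑ u', ∑ v', dist w T (u', v', w₀)))
        = ((∑ u, ∑ v, (if P1 u ∧ Q1 v then dist w T (u, v, w₀) else 0))
            * (∑ u', ∑ v', dist w T (u', v', w₀)))
          * ((∑ u, ∑ v, (if P2 u ∧ Q2 v then dist w T (u, v, w₀) else 0))
            * (∑ u', ∑ v', dist w T (u', v', w₀))) := by ring
      _ = ((∑ u, ∑ v, (if P1 u ∧ Q2 v then dist w T (u, v, w₀) else 0))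
            * (∑ u', ∑ v', dist w T (u', v', w₀)))
          * ((∑ u, ∑ v, (if P2 u ∧ Q1 v then dist w T (u, v, w₀) else 0))
            * (∑ u', ∑ v', dist w T (u', v', w₀))) := by
          rw [hmul P1 Q1, hmul P2 Q2, hmul P1 Q2, hmul P2 Q1]; ring
      _ = (∑ u, ∑ v, (if P1 u ∧ Q2 v then dist w T (u, v, w₀) else 0))
          * (∑ u, ∑ v, (if P2 u ∧ Q1 v then dist w T (u, v, w₀) else 0))
          * ((∑ u', ∑ v', dist w T (u', v', w₀)) * (∑ u', ∑ v', dist w T (u', v', w₀))) := by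
          ring

lemma factor_of_rectangle {w : Ω → ℝ} (hw : ∀ ω, 0 ≤ w ω)
    {𝒰 𝒱 𝒲 α β γ : Type*} [Fintype 𝒰] [Fintype 𝒱] [Fintype 𝒲]
    [Fintype α] [Fintype β] [Fintype γ]
    (U : Ω → 𝒰) (V : Ω → 𝒱) (W : Ω → 𝒲) (A : Ω → α) (B : Ω → β) (C : Ω → γ)
    (hUVW : ∀ u v w', dist w (fun ω => (U ω, V ω, W ω)) (u, v, w')
        * (∑ u', ∑ v', dist w (fun ω => (U ω, V ω, W ω)) (u', v', w'))
      = (∑ v', dist w (fun ω => (U ω, V ω, W ω)) (u, v', w'))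
        * (∑ u', dist w (fun ω => (U ω, V ω, W ω)) (u', v, w')))
    (hCW : ∀ ω ω', C ω = C ω' → W ω = W ω')
    (hRect : ∀ ω₁ ω₂ ω₃, C ω₁ = C ω₂ → U ω₃ = U ω₁ → V ω₃ = V ω₂ → W ω₃ = W ω₁ →
      C ω₃ = C ω₁)
    (hA : ∀ ω ω', C ω = C ω' → U ω = U ω' → A ω = A ω')
    (hB : ∀ ω ω', C ω = C ω' → V ω = V ω' → B ω = B ω') :
    ∀ a b c, dist w (fun ω => (A ω, B ω, C ω)) (a, b, c) * dist w C c
      = dist w (fun ω => (A ω, C ω)) (a, c) * dist w (fun ω => (B ω, C ω)) (b, c) := by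
  intro a b c
  by_cases hc : ∃ ωc, C ωc = c
  · obtain ⟨ωc, hωc⟩ := hc
    have master : ∀ ω, C ω = c ↔
        (∃ ω', C ω' = c ∧ U ω' = U ω) ∧ (∃ ω', C ω' = c ∧ V ω' = V ω) ∧ W ω = W ωc := by
      intro ω
      constructor
      · intro h
        exact ⟨⟨ω, h, rfl⟩, ⟨ω, h, rfl⟩, hCW ω ωc (h.trans hωc.symm)⟩
      · rintro ⟨⟨ω₁, h1, hU1⟩, ⟨ω₂, h2, hV2⟩, hWω⟩
        have hW1 : W ω₁ = W ωc := hCW ω₁ ωc (h1.trans hωc.symm)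
        exact (hRect ω₁ ω₂ ω (h1.trans h2.symm) hU1.symm hV2.symm (hWω.trans hW1.symm)).trans h1
    have ev1 : ∀ ω, (A ω, B ω, C ω) = (a, b, c) ↔
        ((fun u => (∃ ω', C ω' = c ∧ U ω' = u) ∧
          ∀ ω', C ω' = c → U ω' = u → A ω' = a) (U ω)
        ∧ (fun v => (∃ ω', C ω' = c ∧ V ω' = v) ∧
          ∀ ω', C ω' = c → V ω' = v → B ω' = b) (V ω) ∧ W ω = W ωc) := by
      intro ω
      simp only [Prod.mk.injEq]
      constructor
      · rintro ⟨hAa, hBb, hCc⟩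
        obtain ⟨hEu, hFv, hWw⟩ := (master ω).mp hCc
        refine ⟨⟨hEu, fun ω' h hU' => ?_⟩, ⟨hFv, fun ω' h hV' => ?_⟩, hWw⟩
        · exact (hA ω' ω (h.trans hCc.symm) hU').trans hAa
        · exact (hB ω' ω (h.trans hCc.symm) hV').trans hBb
      · rintro ⟨⟨hEu, ha⟩, ⟨hFv, hb⟩, hWw⟩
        have hCc : C ω = c := (master ω).mpr ⟨hEu, hFv, hWw⟩
        exact ⟨ha ω hCc rfl, hb ω hCc rfl, hCc⟩
    have ev2 : ∀ ω, (A ω, C ω) = (a, c) ↔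
        ((fun u => (∃ ω', C ω' = c ∧ U ω' = u) ∧
          ∀ ω', C ω' = c → U ω' = u → A ω' = a) (U ω)
        ∧ (fun v => ∃ ω', C ω' = c ∧ V ω' = v) (V ω) ∧ W ω = W ωc) := by
      intro ω
      simp only [Prod.mk.injEq]
      constructor
      · rintro ⟨hAa, hCc⟩
        obtain ⟨hEu, hFv, hWw⟩ := (master ω).mp hCc
        exact ⟨⟨hEu, fun ω' h hU' => (hA ω' ω (h.trans hCc.symm) hU').trans hAa⟩, hFv, hWw⟩
      · rintro ⟨⟨hEu, ha⟩, hFv, hWw⟩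
        have hCc : C ω = c := (master ω).mpr ⟨hEu, hFv, hWw⟩
        exact ⟨ha ω hCc rfl, hCc⟩
    have ev3 : ∀ ω, (B ω, C ω) = (b, c) ↔
        ((fun u => ∃ ω', C ω' = c ∧ U ω' = u) (U ω)
        ∧ (fun v => (∃ ω', C ω' = c ∧ V ω' = v) ∧
          ∀ ω', C ω' = c → V ω' = v → B ω' = b) (V ω) ∧ W ω = W ωc) := by
      intro ω
      simp only [Prod.mk.injEq]
      constructor
      · rintro ⟨hBb, hCc⟩
        obtain ⟨hEu, hFv, hWw⟩ := (master ω).mp hCc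
        exact ⟨hEu, ⟨hFv, fun ω' h hV' => (hB ω' ω (h.trans hCc.symm) hV').trans hBb⟩, hWw⟩
      · rintro ⟨hEu, ⟨hFv, hb⟩, hWw⟩
        have hCc : C ω = c := (master ω).mpr ⟨hEu, hFv, hWw⟩
        exact ⟨hb ω hCc rfl, hCc⟩
    have ev4 : ∀ ω, C ω = c ↔
        ((fun u => ∃ ω', C ω' = c ∧ U ω' = u) (U ω)
        ∧ (fun v => ∃ ω', C ω' = c ∧ V ω' = v) (V ω) ∧ W ω = W ωc) := master
    have g1 := (dist_eq_pr (w := w) (fun ω => (A ω, B ω, C ω)) (a, b, c)).trans (pr_congr ev1)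
    have g2 := (dist_eq_pr (w := w) (fun ω => (A ω, C ω)) (a, c)).trans (pr_congr ev2)
    have g3 := (dist_eq_pr (w := w) (fun ω => (B ω, C ω)) (b, c)).trans (pr_congr ev3)
    have g4 := (dist_eq_pr (w := w) C c).trans (pr_congr ev4)
    rw [g1, g2, g3, g4]
    exact pr_rect hw U V W (W ωc) (fun u v => hUVW u v (W ωc))
      (fun u => (∃ ω', C ω' = c ∧ U ω' = u) ∧ ∀ ω', C ω' = c → U ω' = u → A ω' = a)
      (fun u => ∃ ω', C ω' = c ∧ U ω' = u)
      (fun v => (∃ ω', C ω' = c ∧ V ω' = v) ∧ ∀ ω', C ω' = c → V ω' = v → B ω' = b)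
      (fun v => ∃ ω', C ω' = c ∧ V ω' = v)
  · push_neg at hc
    have z1 : dist w (fun ω => (A ω, B ω, C ω)) (a, b, c) = 0 := by
      unfold IT.dist
      refine Finset.sum_eq_zero fun ω _ => if_neg fun h => hc ω ?_
      exact congrArg (fun x : α × β × γ => x.2.2) h
    have z2 : dist w (fun ω => (A ω, C ω)) (a, c) = 0 := by
      unfold IT.dist
      refine Finset.sum_eq_zero fun ω _ => if_neg fun h => hc ω ?_
      exact congrArg (fun x : α × γ => x.2) h
    rw [z1, z2]
    ring

end ThreeNodeAux
namespace ThreeNodeAux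

open IT

open Classical in
/-- single-letter probability -/
noncomputable def slp {S : Type*} {τ : Type*} [Fintype S] (p : S → ℝ) (F : S → τ)
    (y : τ) : ℝ :=
  ∑ x, if F x = y then p x else 0

open Classical

lemma dist_pi {S τ : Type*} [Fintype S] [Fintype τ] (p : S → ℝ) {n : ℕ}
    (F : Fin n → S → τ) (y : Fin n → τ) :
    dist (iidW p n) (fun ω s => F s (ω s)) y = ∏ s, slp p (F s) (y s) := by
  unfold slp
  rw [Fintype.prod_sum (fun s x => if F s x = y s then p x else 0)]
  unfold IT.dist iidW
  refine Finset.sum_congr rfl fun ω _ => ?_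
  by_cases h : (fun s => F s (ω s)) = y
  · rw [if_pos h]
    refine (Finset.prod_congr rfl fun s _ => ?_).symm
    rw [if_pos (congrFun h s)]
  · rw [if_neg h]
    obtain ⟨s, hs⟩ : ∃ s, F s (ω s) ≠ y s := by
      by_contra hcon
      push_neg at hcon
      exact h (funext hcon)
    refine (Finset.prod_eq_zero (Finset.mem_univ s)
      (show (if F s (ω s) = y s then p (ω s) else 0) = 0 from if_neg hs)).symm

set_option maxHeartbeats 2000000 in
lemma iid_indep {S U₀ V₀ W₀ : Type*} [Fintype S] [Fintype U₀] [Fintype V₀] [Fintype W₀]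
    (p : S → ℝ) {n : ℕ}
    (f : Fin n → S → U₀) (g : Fin n → S → V₀) (h : Fin n → S → W₀)
    (htriv : ∀ s, (∀ x x', f s x = f s x') ∨ (∀ x x', g s x = g s x')) :
    ∀ (u : Fin n → U₀) (v : Fin n → V₀) (w' : Fin n → W₀),
      dist (iidW p n) (fun ω => ((fun s => f s (ω s)), (fun s => g s (ω s)),
          (fun s => h s (ω s)))) (u, v, w')
        * (∑ u', ∑ v', dist (iidW p n) (fun ω => ((fun s => f s (ω s)),
            (fun s => g s (ω s)), (fun s => h s (ω s)))) (u', v', w'))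
      = (∑ v', dist (iidW p n) (fun ω => ((fun s => f s (ω s)), (fun s => g s (ω s)),
            (fun s => h s (ω s)))) (u, v', w'))
        * (∑ u', dist (iidW p n) (fun ω => ((fun s => f s (ω s)), (fun s => g s (ω s)),
            (fun s => h s (ω s)))) (u', v, w')) := by
  intro u v w'
  -- joint as product
  have e3 : ∀ (u : Fin n → U₀) (v : Fin n → V₀),
      dist (iidW p n) (fun ω => ((fun s => f s (ω s)), (fun s => g s (ω s)),
          (fun s => h s (ω s)))) (u, v, w')
      = ∏ s, slp p (fun x => ((f s x, g s x, h s x) : U₀ × V₀ × W₀)) (u s, v s, w' s) := by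
    intro u v
    have h1 : dist (iidW p n) (fun ω => ((fun s => f s (ω s)), (fun s => g s (ω s)),
          (fun s => h s (ω s)))) (u, v, w')
        = dist (iidW p n) (fun ω => (fun s => ((f s (ω s), g s (ω s), h s (ω s))
          : U₀ × V₀ × W₀))) (fun s => (u s, v s, w' s)) := by
      refine dist_of_iff _ _ _ _ fun ω => ?_
      simp only [Prod.ext_iff, funext_iff, forall_and]
    rw [h1]
    exact dist_pi p (fun s x => (f s x, g s x, h s x)) (fun s => (u s, v s, w' s))
  -- marginals as products
  have eVW : ∀ v : Fin n → V₀, (∑ u', dist (iidW p n) (fun ω => ((fun s => f s (ω s)),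
        (fun s => g s (ω s)), (fun s => h s (ω s)))) (u', v, w'))
      = ∏ s, slp p (fun x => ((g s x, h s x) : V₀ × W₀)) (v s, w' s) := by
    intro v
    have h0 : (∑ u', dist (iidW p n) (fun ω => ((fun s => f s (ω s)),
          (fun s => g s (ω s)), (fun s => h s (ω s)))) (u', v, w'))
        = dist (iidW p n) (fun ω => ((fun s => g s (ω s)), (fun s => h s (ω s)))) (v, w') :=
      sum_dist_fst (fun ω : Fin n → S => (fun s => f s (ω s)))
        (fun ω => ((fun s => g s (ω s)), (fun s => h s (ω s)))) (v, w')
    rw [h0]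
    have h1 : dist (iidW p n) (fun ω => ((fun s => g s (ω s)), (fun s => h s (ω s)))) (v, w')
        = dist (iidW p n) (fun ω => (fun s => ((g s (ω s), h s (ω s)) : V₀ × W₀)))
          (fun s => (v s, w' s)) := by
      refine dist_of_iff _ _ _ _ fun ω => ?_
      simp only [Prod.ext_iff, funext_iff, forall_and]
    rw [h1]
    exact dist_pi p (fun s x => (g s x, h s x)) (fun s => (v s, w' s))
  have eUW : (∑ v', dist (iidW p n) (fun ω => ((fun s => f s (ω s)),
        (fun s => g s (ω s)), (fun s => h s (ω s)))) (u, v', w'))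
      = ∏ s, slp p (fun x => ((f s x, h s x) : U₀ × W₀)) (u s, w' s) := by
    have h0 : (∑ v', dist (iidW p n) (fun ω => ((fun s => f s (ω s)),
          (fun s => g s (ω s)), (fun s => h s (ω s)))) (u, v', w'))
        = dist (iidW p n) (fun ω => ((fun s => f s (ω s)), (fun s => h s (ω s)))) (u, w') :=
      sum_dist_mid (fun ω : Fin n → S => (fun s => f s (ω s))) (fun ω : Fin n → S => (fun s => g s (ω s)))
        (fun ω : Fin n → S => (fun s => h s (ω s))) u w'
    rw [h0]
    have h1 : dist (iidW p n) (fun ω => ((fun s => f s (ω s)), (fun s => h s (ω s)))) (u, w')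
        = dist (iidW p n) (fun ω => (fun s => ((f s (ω s), h s (ω s)) : U₀ × W₀)))
          (fun s => (u s, w' s)) := by
      refine dist_of_iff _ _ _ _ fun ω => ?_
      simp only [Prod.ext_iff, funext_iff, forall_and]
    rw [h1]
    exact dist_pi p (fun s x => (f s x, h s x)) (fun s => (u s, w' s))
  have eW : (∑ u', ∑ v', dist (iidW p n) (fun ω => ((fun s => f s (ω s)),
        (fun s => g s (ω s)), (fun s => h s (ω s)))) (u', v', w'))
      = ∏ s, slp p (h s) (w' s) := by
    have h0 : ∀ u' : Fin n → U₀, (∑ v', dist (iidW p n) (fun ω => ((fun s => f s (ω s)),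
          (fun s => g s (ω s)), (fun s => h s (ω s)))) (u', v', w'))
        = ∑ v', dist (iidW p n) (fun ω => ((fun s => f s (ω s)),
          (fun s => g s (ω s)), (fun s => h s (ω s)))) (u', v', w') := fun _ => rfl
    rw [Finset.sum_comm]
    have h1 : ∀ v' : Fin n → V₀, (∑ u', dist (iidW p n) (fun ω => ((fun s => f s (ω s)),
          (fun s => g s (ω s)), (fun s => h s (ω s)))) (u', v', w'))
        = dist (iidW p n) (fun ω => ((fun s => g s (ω s)), (fun s => h s (ω s)))) (v', w') :=
      fun v' => sum_dist_fst (fun ω : Fin n → S => (fun s => f s (ω s)))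
        (fun ω => ((fun s => g s (ω s)), (fun s => h s (ω s)))) (v', w')
    rw [Finset.sum_congr rfl fun v' _ => h1 v']
    have h2 : (∑ v', dist (iidW p n) (fun ω => ((fun s => g s (ω s)),
          (fun s => h s (ω s)))) (v', w'))
        = dist (iidW p n) (fun ω => (fun s => h s (ω s))) w' :=
      sum_dist_fst (fun ω : Fin n → S => (fun s => g s (ω s))) (fun ω : Fin n → S => (fun s => h s (ω s))) w'
    rw [h2]
    exact dist_pi p h w'
  rw [e3 u v, eW, eUW, eVW v, ← Finset.prod_mul_distrib, ← Finset.prod_mul_distrib]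
  refine Finset.prod_congr rfl fun s _ => ?_
  -- single-letter independence
  rcases isEmpty_or_nonempty S with hS | hS
  · simp [slp]
  obtain ⟨x₀⟩ := hS
  rcases htriv s with hf | hg
  · by_cases hu : f s x₀ = u s
    · have h1 : slp p (fun x => ((f s x, g s x, h s x) : U₀ × V₀ × W₀)) (u s, v s, w' s)
          = slp p (fun x => ((g s x, h s x) : V₀ × W₀)) (v s, w' s) := by
        unfold slp
        refine Finset.sum_congr rfl fun x _ => iteP_congr ?_ _ _
        simp only [Prod.ext_iff]
        rw [hf x x₀]
        simp [hu]
      have h2 : slp p (fun x => ((f s x, h s x) : U₀ × W₀)) (u s, w' s)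
          = slp p (h s) (w' s) := by
        unfold slp
        refine Finset.sum_congr rfl fun x _ => iteP_congr ?_ _ _
        simp only [Prod.ext_iff]
        rw [hf x x₀]
        simp [hu]
      rw [h1, h2]
      ring
    · have h1 : slp p (fun x => ((f s x, g s x, h s x) : U₀ × V₀ × W₀)) (u s, v s, w' s)
          = 0 := by
        unfold slp
        refine Finset.sum_eq_zero fun x _ => iteP_neg ?_ _ _
        simp only [Prod.ext_iff]
        rw [hf x x₀]
        simp [hu]
      have h2 : slp p (fun x => ((f s x, h s x) : U₀ × W₀)) (u s, w' s) = 0 := by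
        unfold slp
        refine Finset.sum_eq_zero fun x _ => iteP_neg ?_ _ _
        simp only [Prod.ext_iff]
        rw [hf x x₀]
        simp [hu]
      rw [h1, h2]
      ring
  · by_cases hv : g s x₀ = v s
    · have h1 : slp p (fun x => ((f s x, g s x, h s x) : U₀ × V₀ × W₀)) (u s, v s, w' s)
          = slp p (fun x => ((f s x, h s x) : U₀ × W₀)) (u s, w' s) := by
        unfold slp
        refine Finset.sum_congr rfl fun x _ => iteP_congr ?_ _ _
        simp only [Prod.ext_iff]
        rw [hg x x₀]
        simp only [hv, true_and]
      have h2 : slp p (fun x => ((g s x, h s x) : V₀ × W₀)) (v s, w' s)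
          = slp p (h s) (w' s) := by
        unfold slp
        refine Finset.sum_congr rfl fun x _ => iteP_congr ?_ _ _
        simp only [Prod.ext_iff]
        rw [hg x x₀]
        simp [hv]
      rw [h1, h2]
    · have h1 : slp p (fun x => ((f s x, g s x, h s x) : U₀ × V₀ × W₀)) (u s, v s, w' s)
          = 0 := by
        unfold slp
        refine Finset.sum_eq_zero fun x _ => iteP_neg ?_ _ _
        simp only [Prod.ext_iff]
        rw [hg x x₀]
        simp [hv]
      have h2 : slp p (fun x => ((g s x, h s x) : V₀ × W₀)) (v s, w' s) = 0 := by
        unfold slp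
        refine Finset.sum_eq_zero fun x _ => iteP_neg ?_ _ _
        simp only [Prod.ext_iff]
        rw [hg x x₀]
        simp [hv]
      rw [h1, h2]
      ring

end ThreeNodeAux
namespace ThreeNodeAux

lemma trunc_eq_iff {K : ℕ} {γ : Fin K → Type*} (l : ℕ) (f f' : (k : Fin K) → γ k) :
    trunc l f = trunc l f' ↔ ∀ k : Fin K, k.val < l → f k = f' k := by
  constructor
  · intro h k hk
    have := congrFun h k
    rw [trunc, trunc] at this
    simp only [if_pos hk] at this
    exact Option.some.inj this
  · intro h
    funext k
    rw [trunc, trunc]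
    by_cases hk : k.val < l
    · rw [if_pos hk, if_pos hk, h k hk]
    · rw [if_neg hk, if_neg hk]

lemma below_eq_iff {n : ℕ} {α : Type*} (t : ℕ) (x x' : Fin n → α) :
    below t x = below t x' ↔ ∀ s : Fin n, s.val < t → x s = x' s := by
  constructor
  · intro h s hs
    have := congrFun h s
    rw [below, below] at this
    simp only [if_pos hs] at this
    exact Option.some.inj this
  · intro h
    funext s
    rw [below, below]
    by_cases hs : s.val < t
    · rw [if_pos hs, if_pos hs, h s hs]
    · rw [if_neg hs, if_neg hs]

lemma above_eq_iff {n : ℕ} {α : Type*} (t : ℕ) (x x' : Fin n → α) :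
    above t x = above t x' ↔ ∀ s : Fin n, t < s.val → x s = x' s := by
  constructor
  · intro h s hs
    have := congrFun h s
    rw [above, above] at this
    simp only [if_pos hs] at this
    exact Option.some.inj this
  · intro h
    funext s
    rw [above, above]
    by_cases hs : t < s.val
    · rw [if_pos hs, if_pos hs, h s hs]
    · rw [if_neg hs, if_neg hs]

lemma fromIdx_eq_iff {n : ℕ} {α : Type*} (t : ℕ) (x x' : Fin n → α) :
    fromIdx t x = fromIdx t x' ↔ ∀ s : Fin n, t ≤ s.val → x s = x' s := by
  constructor
  · intro h s hs
    have := congrFun h s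
    rw [fromIdx, fromIdx] at this
    simp only [if_pos hs] at this
    exact Option.some.inj this
  · intro h
    funext s
    rw [fromIdx, fromIdx]
    by_cases hs : t ≤ s.val
    · rw [if_pos hs, if_pos hs, h s hs]
    · rw [if_neg hs, if_neg hs]

section Messages

variable {XA YA ZA : Type} {n K : ℕ} {mx my mz : Fin K → ℕ}
  (Jx : (l : Fin K) → (Fin n → XA × YA × ZA) → Fin (mx l))
  (Jy : (l : Fin K) → (Fin n → XA × YA × ZA) → Fin (my l))
  (Jz : (l : Fin K) → (Fin n → XA × YA × ZA) → Fin (mz l))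

/-- Two-point message agreement: if X and Y coordinates agree and the Z-messages
below `l` agree, then the X- and Y-messages up to level `l` agree. -/
lemma msgA
    (hJx : ∀ l : Fin K, ∃ f : (Fin n → XA) →
        ((k : Fin K) → k.val < l.val → Fin (mx k)) →
        ((k : Fin K) → k.val < l.val → Fin (my k)) →
        ((k : Fin K) → k.val < l.val → Fin (mz k)) → Fin (mx l),
      ∀ ω, Jx l ω = f (fun t => (ω t).1)
        (fun k _ => Jx k ω) (fun k _ => Jy k ω) (fun k _ => Jz k ω))
    (hJy : ∀ l : Fin K, ∃ f : (Fin n → YA) →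
        ((k : Fin K) → k.val ≤ l.val → Fin (mx k)) →
        ((k : Fin K) → k.val < l.val → Fin (my k)) →
        ((k : Fin K) → k.val < l.val → Fin (mz k)) → Fin (my l),
      ∀ ω, Jy l ω = f (fun t => (ω t).2.1)
        (fun k _ => Jx k ω) (fun k _ => Jy k ω) (fun k _ => Jz k ω))
    (l : ℕ) (ω ω' : Fin n → XA × YA × ZA)
    (hX : ∀ s, (ω s).1 = (ω' s).1) (hY : ∀ s, (ω s).2.1 = (ω' s).2.1)
    (hz : ∀ k : Fin K, k.val < l → Jz k ω = Jz k ω') :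
    ∀ k : Fin K, k.val ≤ l → Jx k ω = Jx k ω' ∧ Jy k ω = Jy k ω' := by
  have main : ∀ N, ∀ k : Fin K, k.val < N → k.val ≤ l →
      Jx k ω = Jx k ω' ∧ Jy k ω = Jy k ω' := by
    intro N
    induction N with
    | zero => exact fun k hk _ => absurd hk (Nat.not_lt_zero _)
    | succ N ih =>
      intro k hk hkl
      rcases Nat.lt_succ_iff_lt_or_eq.mp hk with hlt | heq
      · exact ih k hlt hkl
      · have ih' : ∀ k' : Fin K, k'.val < k.val → k'.val ≤ l →
            Jx k' ω = Jx k' ω' ∧ Jy k' ω = Jy k' ω' := fun k' hk' =>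
          ih k' (heq ▸ hk')
        have hx : Jx k ω = Jx k ω' := by
          obtain ⟨f, hf⟩ := hJx k
          rw [hf ω, hf ω']
          have eX : (fun t => (ω t).1) = fun t => (ω' t).1 := funext hX
          have ex : (fun (k' : Fin K) (_ : k'.val < k.val) => Jx k' ω)
              = fun k' _ => Jx k' ω' := by
            funext k' h'
            exact (ih' k' h' (le_of_lt (lt_of_lt_of_le h' hkl))).1
          have ey : (fun (k' : Fin K) (_ : k'.val < k.val) => Jy k' ω)
              = fun k' _ => Jy k' ω' := by
            funext k' h'
            exact (ih' k' h' (le_of_lt (lt_of_lt_of_le h' hkl))).2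
          have ez : (fun (k' : Fin K) (_ : k'.val < k.val) => Jz k' ω)
              = fun k' _ => Jz k' ω' := by
            funext k' h'
            exact hz k' (lt_of_lt_of_le h' hkl)
          rw [eX, ex, ey, ez]
        refine ⟨hx, ?_⟩
        obtain ⟨f, hf⟩ := hJy k
        rw [hf ω, hf ω']
        have eY : (fun t => (ω t).2.1) = fun t => (ω' t).2.1 := funext hY
        have ex : (fun (k' : Fin K) (_ : k'.val ≤ k.val) => Jx k' ω)
            = fun k' _ => Jx k' ω' := by
          funext k' h'
          rcases lt_or_eq_of_le h' with h'' | h''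
          · exact (ih' k' h'' (le_of_lt (lt_of_lt_of_le h'' hkl))).1
          · have : k' = k := Fin.ext h''
            subst this
            exact hx
        have ey : (fun (k' : Fin K) (_ : k'.val < k.val) => Jy k' ω)
            = fun k' _ => Jy k' ω' := by
          funext k' h'
          exact (ih' k' h' (le_of_lt (lt_of_lt_of_le h' hkl))).2
        have ez : (fun (k' : Fin K) (_ : k'.val < k.val) => Jz k' ω)
            = fun k' _ => Jz k' ω' := by
          funext k' h'
          exact hz k' (lt_of_lt_of_le h' hkl)
        rw [eY, ex, ey, ez]
  exact fun k hk => main (k.val + 1) k (Nat.lt_succ_self _) hk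

/-- Three-point "rectangle" message agreement. -/
lemma msgRect
    (hJx : ∀ l : Fin K, ∃ f : (Fin n → XA) →
        ((k : Fin K) → k.val < l.val → Fin (mx k)) →
        ((k : Fin K) → k.val < l.val → Fin (my k)) →
        ((k : Fin K) → k.val < l.val → Fin (mz k)) → Fin (mx l),
      ∀ ω, Jx l ω = f (fun t => (ω t).1)
        (fun k _ => Jx k ω) (fun k _ => Jy k ω) (fun k _ => Jz k ω))
    (hJy : ∀ l : Fin K, ∃ f : (Fin n → YA) →
        ((k : Fin K) → k.val ≤ l.val → Fin (mx k)) →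
        ((k : Fin K) → k.val < l.val → Fin (my k)) →
        ((k : Fin K) → k.val < l.val → Fin (mz k)) → Fin (my l),
      ∀ ω, Jy l ω = f (fun t => (ω t).2.1)
        (fun k _ => Jx k ω) (fun k _ => Jy k ω) (fun k _ => Jz k ω))
    (hJz : ∀ l : Fin K, ∃ f : (Fin n → ZA) →
        ((k : Fin K) → k.val ≤ l.val → Fin (mx k)) →
        ((k : Fin K) → k.val ≤ l.val → Fin (my k)) →
        ((k : Fin K) → k.val < l.val → Fin (mz k)) → Fin (mz l),
      ∀ ω, Jz l ω = f (fun t => (ω t).2.2)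
        (fun k _ => Jx k ω) (fun k _ => Jy k ω) (fun k _ => Jz k ω))
    (lx ly lz : ℕ) (hyx : ly ≤ lx) (hzy : lz ≤ ly) (hxz : lx ≤ lz + 1)
    (ω₁ ω₂ ω₃ : Fin n → XA × YA × ZA)
    (hX1 : ∀ s, (ω₃ s).1 = (ω₁ s).1) (hX2 : ∀ s, (ω₂ s).1 = (ω₁ s).1)
    (hY : ∀ s, (ω₃ s).2.1 = (ω₂ s).2.1) (hZ : ∀ s, (ω₃ s).2.2 = (ω₁ s).2.2)
    (h12x : ∀ k : Fin K, k.val < lx → Jx k ω₁ = Jx k ω₂)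
    (h12y : ∀ k : Fin K, k.val < ly → Jy k ω₁ = Jy k ω₂)
    (h12z : ∀ k : Fin K, k.val < lz → Jz k ω₁ = Jz k ω₂) :
    ∀ k : Fin K, (k.val < lx → Jx k ω₃ = Jx k ω₁) ∧ (k.val < ly → Jy k ω₃ = Jy k ω₁)
      ∧ (k.val < lz → Jz k ω₃ = Jz k ω₁) := by
  have main : ∀ N, ∀ k : Fin K, k.val < N →
      (k.val < lx → Jx k ω₃ = Jx k ω₁) ∧ (k.val < ly → Jy k ω₃ = Jy k ω₁)
      ∧ (k.val < lz → Jz k ω₃ = Jz k ω₁) := by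
    intro N
    induction N with
    | zero => exact fun k hk => absurd hk (Nat.not_lt_zero _)
    | succ N ih =>
      intro k hk
      rcases Nat.lt_succ_iff_lt_or_eq.mp hk with hlt | heq
      · exact ih k hlt
      · have ih' : ∀ k' : Fin K, k'.val < k.val →
            (k'.val < lx → Jx k' ω₃ = Jx k' ω₁) ∧ (k'.val < ly → Jy k' ω₃ = Jy k' ω₁)
            ∧ (k'.val < lz → Jz k' ω₃ = Jz k' ω₁) := fun k' hk' => ih k' (heq ▸ hk')
        -- X-messages
        have hx3 : k.val < lx → Jx k ω₃ = Jx k ω₁ := by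
          intro hkx
          obtain ⟨f, hf⟩ := hJx k
          rw [hf ω₃, hf ω₁]
          have eX : (fun t => (ω₃ t).1) = fun t => (ω₁ t).1 := funext hX1
          have ex : (fun (k' : Fin K) (_ : k'.val < k.val) => Jx k' ω₃)
              = fun k' _ => Jx k' ω₁ := by
            funext k' h'
            exact (ih' k' h').1 (lt_trans h' hkx)
          have ey : (fun (k' : Fin K) (_ : k'.val < k.val) => Jy k' ω₃)
              = fun k' _ => Jy k' ω₁ := by
            funext k' h'
            exact (ih' k' h').2.1 (by omega)
          have ez : (fun (k' : Fin K) (_ : k'.val < k.val) => Jz k' ω₃)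
              = fun k' _ => Jz k' ω₁ := by
            funext k' h'
            exact (ih' k' h').2.2 (by omega)
          rw [eX, ex, ey, ez]
        have hy3 : k.val < ly → Jy k ω₃ = Jy k ω₁ := by
          intro hky
          have step : Jy k ω₃ = Jy k ω₂ := by
            obtain ⟨f, hf⟩ := hJy k
            rw [hf ω₃, hf ω₂]
            have eY : (fun t => (ω₃ t).2.1) = fun t => (ω₂ t).2.1 := funext hY
            have ex : (fun (k' : Fin K) (_ : k'.val ≤ k.val) => Jx k' ω₃)
                = fun k' _ => Jx k' ω₂ := by
              funext k' h'
              have hx1 : Jx k' ω₃ = Jx k' ω₁ := by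
                rcases lt_or_eq_of_le h' with h'' | h''
                · exact (ih' k' h'').1 (by omega)
                · have : k' = k := Fin.ext h''
                  subst this
                  exact hx3 (by omega)
              rw [hx1]
              exact h12x k' (by omega)
            have ey : (fun (k' : Fin K) (_ : k'.val < k.val) => Jy k' ω₃)
                = fun k' _ => Jy k' ω₂ := by
              funext k' h'
              rw [(ih' k' h').2.1 (by omega)]
              exact h12y k' (by omega)
            have ez : (fun (k' : Fin K) (_ : k'.val < k.val) => Jz k' ω₃)
                = fun k' _ => Jz k' ω₂ := by
              funext k' h'
              rw [(ih' k' h').2.2 (by omega)]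
              exact h12z k' (by omega)
            rw [eY, ex, ey, ez]
          rw [step]
          exact (h12y k hky).symm
        have hz3 : k.val < lz → Jz k ω₃ = Jz k ω₁ := by
          intro hkz
          obtain ⟨f, hf⟩ := hJz k
          rw [hf ω₃, hf ω₁]
          have eZ : (fun t => (ω₃ t).2.2) = fun t => (ω₁ t).2.2 := funext hZ
          have ex : (fun (k' : Fin K) (_ : k'.val ≤ k.val) => Jx k' ω₃)
              = fun k' _ => Jx k' ω₁ := by
            funext k' h'
            rcases lt_or_eq_of_le h' with h'' | h''
            · exact (ih' k' h'').1 (by omega)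
            · have : k' = k := Fin.ext h''
              subst this
              exact hx3 (by omega)
          have ey : (fun (k' : Fin K) (_ : k'.val ≤ k.val) => Jy k' ω₃)
              = fun k' _ => Jy k' ω₁ := by
            funext k' h'
            rcases lt_or_eq_of_le h' with h'' | h''
            · exact (ih' k' h'').2.1 (by omega)
            · have : k' = k := Fin.ext h''
              subst this
              exact hy3 (by omega)
          have ez : (fun (k' : Fin K) (_ : k'.val < k.val) => Jz k' ω₃)
              = fun k' _ => Jz k' ω₁ := by
            funext k' h'
            exact (ih' k' h').2.2 (by omega)
          rw [eZ, ex, ey, ez]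
        exact ⟨hx3, hy3, hz3⟩
  exact fun k => main (k.val + 1) k (Nat.lt_succ_self _)

end Messages

end ThreeNodeAux

open ThreeNodeAux

open IT

/-- **Lemma (interactive encoding of three nodes), items 1–3.** -/
theorem three_node_interactive_markov_items1_3
    {XA YA ZA : Type} [Fintype XA] [Fintype YA] [Fintype ZA]
    (p : XA × YA × ZA → ℝ) (hp : IsPMF p)
    {n K : ℕ} (mx my mz : Fin K → ℕ)
    (Jx : (l : Fin K) → (Fin n → XA × YA × ZA) → Fin (mx l))
    (Jy : (l : Fin K) → (Fin n → XA × YA × ZA) → Fin (my l))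
    (Jz : (l : Fin K) → (Fin n → XA × YA × ZA) → Fin (mz l))
    -- J_x^l = f_x^l(Xⁿ, J_x^{[1:l-1]}, J_y^{[1:l-1]}, J_z^{[1:l-1]})
    (hJx : ∀ l : Fin K, ∃ f : (Fin n → XA) →
        ((k : Fin K) → k.val < l.val → Fin (mx k)) →
        ((k : Fin K) → k.val < l.val → Fin (my k)) →
        ((k : Fin K) → k.val < l.val → Fin (mz k)) → Fin (mx l),
      ∀ ω, Jx l ω = f (fun t => (ω t).1)
        (fun k _ => Jx k ω) (fun k _ => Jy k ω) (fun k _ => Jz k ω))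
    -- J_y^l = f_y^l(Yⁿ, J_x^{[1:l]}, J_y^{[1:l-1]}, J_z^{[1:l-1]})
    (hJy : ∀ l : Fin K, ∃ f : (Fin n → YA) →
        ((k : Fin K) → k.val ≤ l.val → Fin (mx k)) →
        ((k : Fin K) → k.val < l.val → Fin (my k)) →
        ((k : Fin K) → k.val < l.val → Fin (mz k)) → Fin (my l),
      ∀ ω, Jy l ω = f (fun t => (ω t).2.1)
        (fun k _ => Jx k ω) (fun k _ => Jy k ω) (fun k _ => Jz k ω))
    -- J_z^l = f_z^l(Zⁿ, J_x^{[1:l]}, J_y^{[1:l]}, J_z^{[1:l-1]})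
    (hJz : ∀ l : Fin K, ∃ f : (Fin n → ZA) →
        ((k : Fin K) → k.val ≤ l.val → Fin (mx k)) →
        ((k : Fin K) → k.val ≤ l.val → Fin (my k)) →
        ((k : Fin K) → k.val < l.val → Fin (mz k)) → Fin (mz l),
      ∀ ω, Jz l ω = f (fun t => (ω t).2.2)
        (fun k _ => Jx k ω) (fun k _ => Jy k ω) (fun k _ => Jz k ω))
    (hK : 0 < K) :
    ∀ t : Fin n,
      -- (1) (J_x^1, J_y^1, X_{[1:t-1]}, X_{[t+1:n]}, Y_{[t+1:n]}, Z_{[1:t-1]}) -∘- (X_t,Y_t) -∘- Z_t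
      IT.condMutInfo (iidW p n)
        (fun ω => (Jx ⟨0, hK⟩ ω, Jy ⟨0, hK⟩ ω,
          below t.val (fun s => (ω s).1), above t.val (fun s => (ω s).1),
          above t.val (fun s => (ω s).2.1), below t.val (fun s => (ω s).2.2)))
        (fun ω => (ω t).2.2)
        (fun ω => ((ω t).1, (ω t).2.1)) = 0 ∧
      -- (2) (J_x^l, J_y^l, Y_{[1:t-1]})
      --       -∘- (J_x^{[1:l-1]}, J_y^{[1:l-1]}, J_z^{[1:l-1]}, Xⁿ, Y_{[t:n]}, Z_{[1:t-1]}) -∘- Z_t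
      (∀ l : Fin K,
        IT.condMutInfo (iidW p n)
          (fun ω => (Jx l ω, Jy l ω, below t.val (fun s => (ω s).2.1)))
          (fun ω => (ω t).2.2)
          (fun ω => (trunc l.val (fun k => Jx k ω), trunc l.val (fun k => Jy k ω),
            trunc l.val (fun k => Jz k ω), (fun s => (ω s).1),
            fromIdx t.val (fun s => (ω s).2.1), below t.val (fun s => (ω s).2.2))) = 0) ∧
      -- (3) (J_z^l, Z_{[t+1:n]})
      --       -∘- (J_x^{[1:l]}, J_y^{[1:l]}, J_z^{[1:l-1]}, Xⁿ, Y_{[t+1:n]}, Z_{[1:t]}) -∘- Y_t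
      (∀ l : Fin K,
        IT.condMutInfo (iidW p n)
          (fun ω => (Jz l ω, above t.val (fun s => (ω s).2.2)))
          (fun ω => (ω t).2.1)
          (fun ω => (trunc (l.val + 1) (fun k => Jx k ω), trunc (l.val + 1) (fun k => Jy k ω),
            trunc l.val (fun k => Jz k ω), (fun s => (ω s).1),
            above t.val (fun s => (ω s).2.1), below (t.val + 1) (fun s => (ω s).2.2))) = 0) := by
  intro t
  have hw : ∀ ω : Fin n → XA × YA × ZA, 0 ≤ iidW p n ω :=
    fun ω => Finset.prod_nonneg fun s _ => hp.1 _
  refine ⟨?_, ?_, ?_⟩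
  · -- item 1
    refine cmi_zero_of_factor hw _ _ _ ?_
    refine factor_of_rectangle hw
      (fun ω => fun s => if s = t then (none : Option (XA × YA × ZA)) else some (ω s))
      (fun ω => fun s => if s = t then some ((ω s).2.2) else (none : Option ZA))
      (fun ω => fun s => if s = t then some ((ω s).1, (ω s).2.1)
        else (none : Option (XA × YA)))
      _ _ _
      (iid_indep p
        (fun s x => if s = t then (none : Option (XA × YA × ZA)) else some x)
        (fun s x => if s = t then some x.2.2 else (none : Option ZA))
        (fun s x => if s = t then some (x.1, x.2.1) else (none : Option (XA × YA)))
        (fun s => by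
          by_cases hs : s = t
          · exact Or.inl (fun x x' => by simp [hs])
          · exact Or.inr (fun x x' => by simp [hs])))
      ?_ ?_ ?_ ?_
    · -- hCW
      intro ω ω' h
      funext s
      by_cases hs : s = t
      · subst hs
        simpa using h
      · simp [hs]
    · -- hRect
      intro ω₁ ω₂ ω₃ h12 hU hV hW
      have h : (if t = t then some ((ω₃ t).1, (ω₃ t).2.1) else none)
          = (if t = t then some ((ω₁ t).1, (ω₁ t).2.1) else none) := congrFun hW t
      rw [if_pos rfl, if_pos rfl] at h
      exact Option.some.inj h
    · -- hA
      intro ω ω' hC hU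
      have hUs : ∀ s : Fin n, s ≠ t → ω s = ω' s := by
        intro s hs
        have h2 : (if s = t then none else some (ω s))
            = (if s = t then none else some (ω' s)) := congrFun hU s
        rw [if_neg hs, if_neg hs] at h2
        exact Option.some.inj h2
      have hX : ∀ s, (ω s).1 = (ω' s).1 := by
        intro s
        by_cases hs : s = t
        · subst hs
          exact congrArg (Prod.fst : XA × YA → XA) hC
        · rw [hUs s hs]
      have hY : ∀ s, (ω s).2.1 = (ω' s).2.1 := by
        intro s
        by_cases hs : s = t
        · subst hs
          exact congrArg (Prod.snd : XA × YA → YA) hC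
        · rw [hUs s hs]
      have hmsg := msgA Jx Jy Jz hJx hJy 0 ω ω' hX hY
        (fun k hk => absurd hk (Nat.not_lt_zero _)) ⟨0, hK⟩ (Nat.le_refl 0)
      simp only [Prod.mk.injEq]
      refine ⟨hmsg.1, hmsg.2, ?_, ?_, ?_, ?_⟩
      · exact (below_eq_iff _ _ _).mpr fun s _ => hX s
      · exact (above_eq_iff _ _ _).mpr fun s _ => hX s
      · exact (above_eq_iff _ _ _).mpr fun s _ => hY s
      · refine (below_eq_iff _ _ _).mpr fun s hs => ?_
        have hst : s ≠ t := by
          intro he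
          rw [he] at hs
          exact absurd hs (lt_irrefl _)
        rw [hUs s hst]
    · -- hB
      intro ω ω' hC hV
      have h2 : (if t = t then some ((ω t).2.2) else none)
          = (if t = t then some ((ω' t).2.2) else none) := congrFun hV t
      rw [if_pos rfl, if_pos rfl] at h2
      exact Option.some.inj h2
  · -- item 2
    intro l
    refine cmi_zero_of_factor hw _ _ _ ?_
    refine factor_of_rectangle hw
      (fun ω => fun s => if s.val < t.val then some ((ω s).2.1) else (none : Option YA))
      (fun ω => fun s => if t.val ≤ s.val then some ((ω s).2.2) else (none : Option ZA))
      (fun ω => fun s => (((ω s).1 : XA),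
        (if t.val ≤ s.val then some ((ω s).2.1) else (none : Option YA)),
        (if s.val < t.val then some ((ω s).2.2) else (none : Option ZA))))
      _ _ _
      (iid_indep p
        (fun s x => if s.val < t.val then some x.2.1 else (none : Option YA))
        (fun s x => if t.val ≤ s.val then some x.2.2 else (none : Option ZA))
        (fun s x => ((x.1 : XA),
          (if t.val ≤ s.val then some x.2.1 else (none : Option YA)),
          (if s.val < t.val then some x.2.2 else (none : Option ZA))))
        (fun s => by
          by_cases hs : s.val < t.val
          · exact Or.inr (fun x x' => by simp [show ¬ t.val ≤ s.val from by omega])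
          · exact Or.inl (fun x x' => by simp [hs])))
      ?_ ?_ ?_ ?_
    · -- hCW
      intro ω ω' hC
      simp only [Prod.mk.injEq] at hC
      obtain ⟨hc1, hc2, hc3, hc4, hc5, hc6⟩ := hC
      have Yge := (fromIdx_eq_iff t.val _ _).mp hc5
      have Zlt := (below_eq_iff t.val _ _).mp hc6
      funext s
      simp only [Prod.mk.injEq]
      refine ⟨congrFun hc4 s, ?_, ?_⟩
      · by_cases hs : t.val ≤ s.val
        · rw [if_pos hs, if_pos hs, Yge s hs]
        · rw [if_neg hs, if_neg hs]
      · by_cases hs : s.val < t.val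
        · rw [if_pos hs, if_pos hs, Zlt s hs]
        · rw [if_neg hs, if_neg hs]
    · -- hRect
      intro ω₁ ω₂ ω₃ h12 hU hV hW
      simp only [Prod.mk.injEq] at h12
      obtain ⟨hc1, hc2, hc3, hc4, hc5, hc6⟩ := h12
      have jx12 := (trunc_eq_iff l.val _ _).mp hc1
      have jy12 := (trunc_eq_iff l.val _ _).mp hc2
      have jz12 := (trunc_eq_iff l.val _ _).mp hc3
      have X12 : ∀ s, (ω₁ s).1 = (ω₂ s).1 := fun s => congrFun hc4 s
      have Y12ge := (fromIdx_eq_iff t.val _ _).mp hc5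
      have Z12lt := (below_eq_iff t.val _ _).mp hc6
      have hWs : ∀ s : Fin n, (((ω₃ s).1 : XA),
          (if t.val ≤ s.val then some ((ω₃ s).2.1) else (none : Option YA)),
          (if s.val < t.val then some ((ω₃ s).2.2) else (none : Option ZA)))
          = (((ω₁ s).1 : XA),
          (if t.val ≤ s.val then some ((ω₁ s).2.1) else (none : Option YA)),
          (if s.val < t.val then some ((ω₁ s).2.2) else (none : Option ZA))) :=
        fun s => congrFun hW s
      have X31 : ∀ s, (ω₃ s).1 = (ω₁ s).1 := fun s => congrArg (fun q => q.1) (hWs s)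
      have Y31ge : ∀ s : Fin n, t.val ≤ s.val → (ω₃ s).2.1 = (ω₁ s).2.1 := by
        intro s hs
        have h2 := congrArg (fun q => q.2.1) (hWs s)
        simp only [if_pos hs] at h2
        exact Option.some.inj h2
      have Z31lt : ∀ s : Fin n, s.val < t.val → (ω₃ s).2.2 = (ω₁ s).2.2 := by
        intro s hs
        have h2 := congrArg (fun q => q.2.2) (hWs s)
        simp only [if_pos hs] at h2
        exact Option.some.inj h2
      have Y31lt : ∀ s : Fin n, s.val < t.val → (ω₃ s).2.1 = (ω₁ s).2.1 := by
        intro s hs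
        have h2 : (if s.val < t.val then some ((ω₃ s).2.1) else (none : Option YA))
            = (if s.val < t.val then some ((ω₁ s).2.1) else none) := congrFun hU s
        rw [if_pos hs, if_pos hs] at h2
        exact Option.some.inj h2
      have Z32ge : ∀ s : Fin n, t.val ≤ s.val → (ω₃ s).2.2 = (ω₂ s).2.2 := by
        intro s hs
        have h2 : (if t.val ≤ s.val then some ((ω₃ s).2.2) else (none : Option ZA))
            = (if t.val ≤ s.val then some ((ω₂ s).2.2) else none) := congrFun hV s
        rw [if_pos hs, if_pos hs] at h2
        exact Option.some.inj h2
      have conc := msgRect Jx Jy Jz hJx hJy hJz l.val l.val l.val le_rfl le_rfl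
        (Nat.le_succ _) ω₂ ω₁ ω₃
        (fun s => (X31 s).trans (X12 s))
        (fun s => X12 s)
        (fun s => by
          by_cases hs : s.val < t.val
          · exact Y31lt s hs
          · exact Y31ge s (by omega))
        (fun s => by
          by_cases hs : t.val ≤ s.val
          · exact Z32ge s hs
          · exact (Z31lt s (by omega)).trans (Z12lt s (by omega)))
        (fun k hk => (jx12 k hk).symm)
        (fun k hk => (jy12 k hk).symm)
        (fun k hk => (jz12 k hk).symm)
      simp only [Prod.mk.injEq]
      refine ⟨(trunc_eq_iff l.val _ _).mpr fun k hk => ((conc k).1 hk).trans (jx12 k hk).symm,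
        (trunc_eq_iff l.val _ _).mpr fun k hk => ((conc k).2.1 hk).trans (jy12 k hk).symm,
        (trunc_eq_iff l.val _ _).mpr fun k hk => ((conc k).2.2 hk).trans (jz12 k hk).symm,
        funext X31,
        (fromIdx_eq_iff t.val _ _).mpr Y31ge,
        (below_eq_iff t.val _ _).mpr Z31lt⟩
    · -- hA
      intro ω ω' hC hU
      simp only [Prod.mk.injEq] at hC
      obtain ⟨hc1, hc2, hc3, hc4, hc5, hc6⟩ := hC
      have jz12 := (trunc_eq_iff l.val _ _).mp hc3
      have Yge := (fromIdx_eq_iff t.val _ _).mp hc5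
      have Ylt : ∀ s : Fin n, s.val < t.val → (ω s).2.1 = (ω' s).2.1 := by
        intro s hs
        have h2 : (if s.val < t.val then some ((ω s).2.1) else (none : Option YA))
            = (if s.val < t.val then some ((ω' s).2.1) else none) := congrFun hU s
        rw [if_pos hs, if_pos hs] at h2
        exact Option.some.inj h2
      have hY : ∀ s, (ω s).2.1 = (ω' s).2.1 := by
        intro s
        by_cases hs : s.val < t.val
        · exact Ylt s hs
        · exact Yge s (by omega)
      have hmsg := msgA Jx Jy Jz hJx hJy l.val ω ω' (fun s => congrFun hc4 s) hY
        jz12 l le_rfl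
      simp only [Prod.mk.injEq]
      exact ⟨hmsg.1, hmsg.2, (below_eq_iff t.val _ _).mpr fun s _ => hY s⟩
    · -- hB
      intro ω ω' hC hV
      have h2 : (if t.val ≤ t.val then some ((ω t).2.2) else (none : Option ZA))
          = (if t.val ≤ t.val then some ((ω' t).2.2) else none) := congrFun hV t
      rw [if_pos le_rfl, if_pos le_rfl] at h2
      exact Option.some.inj h2
  · -- item 3
    intro l
    refine cmi_zero_of_factor hw _ _ _ ?_
    refine factor_of_rectangle hw
      (fun ω => fun s => if t.val < s.val then some ((ω s).2.2) else (none : Option ZA))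
      (fun ω => fun s => if s.val < t.val + 1 then some ((ω s).2.1) else (none : Option YA))
      (fun ω => fun s => (((ω s).1 : XA),
        (if t.val < s.val then some ((ω s).2.1) else (none : Option YA)),
        (if s.val < t.val + 1 then some ((ω s).2.2) else (none : Option ZA))))
      _ _ _
      (iid_indep p
        (fun s x => if t.val < s.val then some x.2.2 else (none : Option ZA))
        (fun s x => if s.val < t.val + 1 then some x.2.1 else (none : Option YA))
        (fun s x => ((x.1 : XA),
          (if t.val < s.val then some x.2.1 else (none : Option YA)),
          (if s.val < t.val + 1 then some x.2.2 else (none : Option ZA))))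
        (fun s => by
          by_cases hs : t.val < s.val
          · exact Or.inr (fun x x' => by simp [show ¬ s.val < t.val + 1 from by omega])
          · exact Or.inl (fun x x' => by simp [hs])))
      ?_ ?_ ?_ ?_
    · -- hCW
      intro ω ω' hC
      simp only [Prod.mk.injEq] at hC
      obtain ⟨hc1, hc2, hc3, hc4, hc5, hc6⟩ := hC
      have Ygt := (above_eq_iff t.val _ _).mp hc5
      have Zle := (below_eq_iff (t.val + 1) _ _).mp hc6
      funext s
      simp only [Prod.mk.injEq]
      refine ⟨congrFun hc4 s, ?_, ?_⟩
      · by_cases hs : t.val < s.val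
        · rw [if_pos hs, if_pos hs, Ygt s hs]
        · rw [if_neg hs, if_neg hs]
      · by_cases hs : s.val < t.val + 1
        · rw [if_pos hs, if_pos hs, Zle s hs]
        · rw [if_neg hs, if_neg hs]
    · -- hRect
      intro ω₁ ω₂ ω₃ h12 hU hV hW
      simp only [Prod.mk.injEq] at h12
      obtain ⟨hc1, hc2, hc3, hc4, hc5, hc6⟩ := h12
      have jx12 := (trunc_eq_iff (l.val + 1) _ _).mp hc1
      have jy12 := (trunc_eq_iff (l.val + 1) _ _).mp hc2
      have jz12 := (trunc_eq_iff l.val _ _).mp hc3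
      have X12 : ∀ s, (ω₁ s).1 = (ω₂ s).1 := fun s => congrFun hc4 s
      have Y12gt := (above_eq_iff t.val _ _).mp hc5
      have Z12le := (below_eq_iff (t.val + 1) _ _).mp hc6
      have hWs : ∀ s : Fin n, (((ω₃ s).1 : XA),
          (if t.val < s.val then some ((ω₃ s).2.1) else (none : Option YA)),
          (if s.val < t.val + 1 then some ((ω₃ s).2.2) else (none : Option ZA)))
          = (((ω₁ s).1 : XA),
          (if t.val < s.val then some ((ω₁ s).2.1) else (none : Option YA)),
          (if s.val < t.val + 1 then some ((ω₁ s).2.2) else (none : Option ZA))) :=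
        fun s => congrFun hW s
      have X31 : ∀ s, (ω₃ s).1 = (ω₁ s).1 := fun s => congrArg (fun q => q.1) (hWs s)
      have Y31gt : ∀ s : Fin n, t.val < s.val → (ω₃ s).2.1 = (ω₁ s).2.1 := by
        intro s hs
        have h2 := congrArg (fun q => q.2.1) (hWs s)
        simp only [if_pos hs] at h2
        exact Option.some.inj h2
      have Z31le : ∀ s : Fin n, s.val < t.val + 1 → (ω₃ s).2.2 = (ω₁ s).2.2 := by
        intro s hs
        have h2 := congrArg (fun q => q.2.2) (hWs s)
        simp only [if_pos hs] at h2
        exact Option.some.inj h2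
      have Z31gt : ∀ s : Fin n, t.val < s.val → (ω₃ s).2.2 = (ω₁ s).2.2 := by
        intro s hs
        have h2 : (if t.val < s.val then some ((ω₃ s).2.2) else (none : Option ZA))
            = (if t.val < s.val then some ((ω₁ s).2.2) else none) := congrFun hU s
        rw [if_pos hs, if_pos hs] at h2
        exact Option.some.inj h2
      have Y32le : ∀ s : Fin n, s.val < t.val + 1 → (ω₃ s).2.1 = (ω₂ s).2.1 := by
        intro s hs
        have h2 : (if s.val < t.val + 1 then some ((ω₃ s).2.1) else (none : Option YA))
            = (if s.val < t.val + 1 then some ((ω₂ s).2.1) else none) := congrFun hV s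
        rw [if_pos hs, if_pos hs] at h2
        exact Option.some.inj h2
      have conc := msgRect Jx Jy Jz hJx hJy hJz (l.val + 1) (l.val + 1) l.val le_rfl
        (Nat.le_succ _) le_rfl ω₁ ω₂ ω₃
        X31
        (fun s => (X12 s).symm)
        (fun s => by
          by_cases hs : s.val < t.val + 1
          · exact Y32le s hs
          · exact (Y31gt s (by omega)).trans (Y12gt s (by omega)))
        (fun s => by
          by_cases hs : s.val < t.val + 1
          · exact Z31le s hs
          · exact Z31gt s (by omega))
        jx12 jy12 jz12
      simp only [Prod.mk.injEq]
      refine ⟨(trunc_eq_iff (l.val + 1) _ _).mpr fun k hk => (conc k).1 hk,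
        (trunc_eq_iff (l.val + 1) _ _).mpr fun k hk => (conc k).2.1 hk,
        (trunc_eq_iff l.val _ _).mpr fun k hk => (conc k).2.2 hk,
        funext X31,
        (above_eq_iff t.val _ _).mpr Y31gt,
        (below_eq_iff (t.val + 1) _ _).mpr Z31le⟩
    · -- hA
      intro ω ω' hC hU
      simp only [Prod.mk.injEq] at hC
      obtain ⟨hc1, hc2, hc3, hc4, hc5, hc6⟩ := hC
      have jx12 := (trunc_eq_iff (l.val + 1) _ _).mp hc1
      have jy12 := (trunc_eq_iff (l.val + 1) _ _).mp hc2
      have jz12 := (trunc_eq_iff l.val _ _).mp hc3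
      have Zle := (below_eq_iff (t.val + 1) _ _).mp hc6
      have Zgt : ∀ s : Fin n, t.val < s.val → (ω s).2.2 = (ω' s).2.2 := by
        intro s hs
        have h2 : (if t.val < s.val then some ((ω s).2.2) else (none : Option ZA))
            = (if t.val < s.val then some ((ω' s).2.2) else none) := congrFun hU s
        rw [if_pos hs, if_pos hs] at h2
        exact Option.some.inj h2
      have hZ : ∀ s, (ω s).2.2 = (ω' s).2.2 := by
        intro s
        by_cases hs : s.val < t.val + 1
        · exact Zle s hs
        · exact Zgt s (by omega)
      have hjz : Jz l ω = Jz l ω' := by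
        obtain ⟨f, hf⟩ := hJz l
        rw [hf ω, hf ω']
        have eZ : (fun s => (ω s).2.2) = fun s => (ω' s).2.2 := funext hZ
        have ex : (fun (k' : Fin K) (_ : k'.val ≤ l.val) => Jx k' ω)
            = fun k' _ => Jx k' ω' := by
          funext k' h'
          exact jx12 k' (by omega)
        have ey : (fun (k' : Fin K) (_ : k'.val ≤ l.val) => Jy k' ω)
            = fun k' _ => Jy k' ω' := by
          funext k' h'
          exact jy12 k' (by omega)
        have ez : (fun (k' : Fin K) (_ : k'.val < l.val) => Jz k' ω)
            = fun k' _ => Jz k' ω' := by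
          funext k' h'
          exact jz12 k' h'
        rw [eZ, ex, ey, ez]
      simp only [Prod.mk.injEq]
      exact ⟨hjz, (above_eq_iff t.val _ _).mpr fun s hs => hZ s⟩
    · -- hB
      intro ω ω' hC hV
      have h2 : (if t.val < t.val + 1 then some ((ω t).2.1) else (none : Option YA))
          = (if t.val < t.val + 1 then some ((ω' t).2.1) else none) := congrFun hV t
      rw [if_pos (Nat.lt_succ_self _), if_pos (Nat.lt_succ_self _)] at h2
      exact Option.some.inj h2
end
end

section
/- (Converse rate bound at node 1 for cooperative lossless transmission of X1.) Let J1 be any random variable taking finitely many values, jointly distributed with (X_1^n, X_2^n); let J2 = f2(X_2^n, J1) for an arbitrary function f2 into a finite set, and let X̂^n = g(J1, J2) ∈ 𝒳1^n for an arbitrary function g. Then H(J1) ≥ n·H(X1|X2) − H(X_1^n | X̂^n). -/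
noncomputable section

open IT

namespace CRB
open IT Finset Real

variable {Ω α β γ : Type*} [Fintype Ω] [Fintype α] [Fintype β] [Fintype γ]


lemma sum_ite_eq_cls {α : Type*} {M : Type*} [Fintype α] [AddCommMonoid M]
    (c : α) (f : α → M) {D : ∀ x, Decidable (c = x)} :
    (∑ x, if c = x then f x else 0) = f c := by
  rw [Finset.sum_eq_single c]
  · exact if_pos rfl
  · intro b _ hb; exact if_neg fun h => hb h.symm
  · exact fun h => absurd (Finset.mem_univ c) h

lemma sum_ite_eq_cls' {α : Type*} {M : Type*} [Fintype α] [AddCommMonoid M]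
    (c : α) (f : α → M) {D : ∀ x, Decidable (x = c)} :
    (∑ x, if x = c then f x else 0) = f c := by
  rw [Finset.sum_eq_single c]
  · exact if_pos rfl
  · intro b _ hb; exact if_neg hb
  · exact fun h => absurd (Finset.mem_univ c) h

lemma dist_nonneg' (w : Ω → ℝ) (hw : ∀ ω, 0 ≤ w ω) (X : Ω → α) (a : α) :
    0 ≤ dist w X a := by
  unfold IT.dist
  refine Finset.sum_nonneg fun ω _ => ?_
  split
  · exact hw ω
  · exact le_refl 0

lemma sum_dist (w : Ω → ℝ) (hw : ∑ ω, w ω = 1) (X : Ω → α) :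
    ∑ a, dist w X a = 1 := by
  unfold IT.dist
  rw [Finset.sum_comm]
  rw [← hw]
  refine Finset.sum_congr rfl fun ω _ => ?_
  exact sum_ite_eq_cls (X ω) (fun _ => w ω)

open Classical in
lemma dist_comp (w : Ω → ℝ) (X : Ω → α) (φ : α → β) (b : β) :
    dist w (fun ω => φ (X ω)) b = ∑ a, if φ a = b then dist w X a else 0 := by
  classical
  unfold IT.dist
  have h : ∀ a : α, (if φ a = b then ∑ ω, if X ω = a then w ω else 0 else 0)
      = ∑ ω, if X ω = a then (if φ a = b then w ω else 0) else 0 := by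
    intro a
    by_cases hc : φ a = b
    · simp only [if_pos hc]
    · simp only [if_neg hc]
      symm; apply Finset.sum_eq_zero; intro ω _; split <;> rfl
  simp only [h]
  rw [Finset.sum_comm]
  exact Finset.sum_congr rfl fun ω _ =>
    (sum_ite_eq_cls (X ω) (fun a => if φ a = b then w ω else 0)).symm

lemma H_comp_inj (w : Ω → ℝ) (X : Ω → α) (φ : α → β) (hφ : Function.Injective φ) :
    H w (fun ω => φ (X ω)) = H w X := by
  classical
  unfold H
  congr 1
  have h1 : ∀ a, dist w (fun ω => φ (X ω)) (φ a) = dist w X a := by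
    intro a; unfold IT.dist
    refine Finset.sum_congr rfl fun ω _ => ?_
    simp [hφ.eq_iff]
  have h2 : ∀ b, b ∉ Finset.univ.image φ → dist w (fun ω => φ (X ω)) b = 0 := by
    intro b hb; unfold IT.dist
    refine Finset.sum_eq_zero fun ω _ => ?_
    rw [if_neg]
    exact fun h => hb (Finset.mem_image.mpr ⟨X ω, Finset.mem_univ _, h⟩)
  rw [← Finset.sum_subset (Finset.subset_univ (Finset.univ.image φ))
      (fun b _ hb => by rw [h2 b hb]; simp)]
  rw [Finset.sum_image (fun a _ b _ h => hφ h)]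
  exact Finset.sum_congr rfl fun a _ => by rw [h1]

lemma sum_cons {n : ℕ} {α : Type*} [Fintype α] (F : (Fin (n+1) → α) → ℝ) :
    ∑ f : Fin (n+1) → α, F f = ∑ a : α, ∑ g : Fin n → α, F (Fin.cons a g) := by
  rw [← Equiv.sum_comp (Fin.consEquiv fun _ => α) F, Fintype.sum_prod_type]
  rfl

lemma prod_cons_apply {n : ℕ} {α : Type*} (q : α → ℝ) (a : α) (g : Fin n → α) :
    ∏ t : Fin (n+1), q ((Fin.cons a g : Fin (n+1) → α) t) = q a * ∏ t, q (g t) := by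
  rw [Fin.prod_univ_succ]
  simp

lemma sum_iid {α : Type*} [Fintype α] {q : α → ℝ} (hq : ∑ a, q a = 1) (n : ℕ) :
    ∑ f : Fin n → α, ∏ t, q (f t) = 1 := by
  induction n with
  | zero => simp
  | succ n ih =>
    rw [sum_cons (fun f => ∏ t, q (f t))]
    simp only [prod_cons_apply]
    simp_rw [← Finset.mul_sum]
    rw [ih]
    simpa using hq

lemma mul_logb_mul {x y : ℝ} (hx : 0 ≤ x) (hy : 0 ≤ y) :
    (x * y) * Real.logb 2 (x * y) = (x * y) * Real.logb 2 x + (x * y) * Real.logb 2 y := by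
  rcases eq_or_lt_of_le hx with h | h
  · simp [← h]
  rcases eq_or_lt_of_le hy with h' | h'
  · simp [← h']
  rw [Real.logb_mul h.ne' h'.ne', mul_add]

lemma S_iid {α : Type*} [Fintype α] {q : α → ℝ} (hq : IsPMF q) (n : ℕ) :
    ∑ f : Fin n → α, (∏ t, q (f t)) * Real.logb 2 (∏ t, q (f t))
      = n * ∑ a, q a * Real.logb 2 (q a) := by
  induction n with
  | zero => simp
  | succ n ih =>
    rw [sum_cons (fun f => (∏ t, q (f t)) * Real.logb 2 (∏ t, q (f t)))]
    simp only [prod_cons_apply]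
    have key : ∀ (a : α) (g : Fin n → α),
        (q a * ∏ t, q (g t)) * Real.logb 2 (q a * ∏ t, q (g t))
          = (q a * ∏ t, q (g t)) * Real.logb 2 (q a)
            + (q a * ∏ t, q (g t)) * Real.logb 2 (∏ t, q (g t)) := by
      intro a g
      exact mul_logb_mul (hq.1 a) (Finset.prod_nonneg fun t _ => hq.1 _)
    simp only [key]
    rw [Finset.sum_congr rfl (fun a _ => Finset.sum_add_distrib)]
    rw [Finset.sum_add_distrib]
    have h1 : ∑ a : α, ∑ g : Fin n → α, (q a * ∏ t, q (g t)) * Real.logb 2 (q a)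
        = ∑ a, q a * Real.logb 2 (q a) := by
      have : ∀ a : α, ∑ g : Fin n → α, (q a * ∏ t, q (g t)) * Real.logb 2 (q a)
          = q a * Real.logb 2 (q a) := by
        intro a
        rw [show (fun g : Fin n → α => (q a * ∏ t, q (g t)) * Real.logb 2 (q a))
            = (fun g : Fin n → α => (q a * Real.logb 2 (q a)) * ∏ t, q (g t)) from by
          funext g; ring]
        rw [← Finset.mul_sum, sum_iid hq.2, mul_one]
      exact Finset.sum_congr rfl fun a _ => this a
    have h2 : ∑ a : α, ∑ g : Fin n → α, (q a * ∏ t, q (g t)) * Real.logb 2 (∏ t, q (g t))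
        = (n : ℝ) * ∑ a, q a * Real.logb 2 (q a) := by
      have : ∀ a : α, ∑ g : Fin n → α, (q a * ∏ t, q (g t)) * Real.logb 2 (∏ t, q (g t))
          = q a * ((n : ℝ) * ∑ b, q b * Real.logb 2 (q b)) := by
        intro a
        rw [← ih, Finset.mul_sum]
        exact Finset.sum_congr rfl fun g _ => by ring
      rw [Finset.sum_congr rfl fun a _ => this a, ← Finset.sum_mul, hq.2, one_mul]
    rw [h1, h2]
    push_cast
    ring

lemma S_marg_le {α β : Type*} [Fintype α] [Fintype β] (r : α → β → ℝ)
    (h0 : ∀ a b, 0 ≤ r a b) :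
    ∑ a, ∑ b, r a b * Real.logb 2 (r a b)
      ≤ ∑ b, (∑ a, r a b) * Real.logb 2 (∑ a, r a b) := by
  rw [Finset.sum_comm]
  refine Finset.sum_le_sum fun b _ => ?_
  rw [Finset.sum_mul]
  refine Finset.sum_le_sum fun a _ => ?_
  rcases eq_or_lt_of_le (h0 a b) with h | h
  · rw [← h]; simp
  · refine mul_le_mul_of_nonneg_left ?_ h.le
    have hle : r a b ≤ ∑ a', r a' b :=
      Finset.single_le_sum (fun a' _ => h0 a' b) (Finset.mem_univ a)
    exact (Real.logb_le_logb one_lt_two h (lt_of_lt_of_le h hle)).mpr hle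

lemma sum3_rot {α β γ : Type*} [Fintype α] [Fintype β] [Fintype γ] (f : α → β → γ → ℝ) :
    ∑ a, ∑ b, ∑ c, f a b c = ∑ c, ∑ a, ∑ b, f a b c := by
  rw [Finset.sum_congr rfl fun a _ => (Finset.sum_comm (s := Finset.univ) (t := Finset.univ) (f := f a)), Finset.sum_comm]

lemma gibbs_term {r A B C : ℝ} (hr : 0 ≤ r) (hrA : r ≤ A) (hrB : r ≤ B) (hrC : r ≤ C) :
    r * Real.logb 2 A + r * Real.logb 2 B - r * Real.logb 2 r - r * Real.logb 2 C
      ≤ ((if 0 < r then A * B / C else 0) - r) / Real.log 2 := by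
  rcases eq_or_lt_of_le hr with h | h
  · rw [if_neg (by rw [← h]; exact lt_irrefl 0)]
    simp [← h]
  rw [if_pos h]
  have hA := lt_of_lt_of_le h hrA
  have hB := lt_of_lt_of_le h hrB
  have hC := lt_of_lt_of_le h hrC
  have hlog2 : 0 < Real.log 2 := Real.log_pos one_lt_two
  have h2 : Real.log (A * B / (r * C))
      = Real.log A + Real.log B - (Real.log r + Real.log C) := by
    rw [Real.log_div (by positivity) (by positivity), Real.log_mul hA.ne' hB.ne',
      Real.log_mul h.ne' hC.ne']
  have h3 := Real.log_le_sub_one_of_pos (show (0:ℝ) < A * B / (r * C) by positivity)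
  rw [h2] at h3
  have hmul : r * (Real.log A + Real.log B - Real.log r - Real.log C) ≤ A * B / C - r := by
    have h4 := mul_le_mul_of_nonneg_left h3 h.le
    have he : r * (A * B / (r * C) - 1) = A * B / C - r := by
      field_simp
    nlinarith [h4, he]
  calc r * Real.logb 2 A + r * Real.logb 2 B - r * Real.logb 2 r - r * Real.logb 2 C
      = (r * (Real.log A + Real.log B - Real.log r - Real.log C)) / Real.log 2 := by
        simp only [Real.logb]; ring
    _ ≤ (A * B / C - r) / Real.log 2 := by
        apply div_le_div_of_nonneg_right hmul hlog2.le

lemma gibbs3 {α β γ : Type*} [Fintype α] [Fintype β] [Fintype γ]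
    (r : α → β → γ → ℝ) (h0 : ∀ a b c, 0 ≤ r a b c)
    (h1 : ∑ a, ∑ b, ∑ c, r a b c = 1) :
    (∑ a, ∑ c, (∑ b, r a b c) * Real.logb 2 (∑ b, r a b c))
      + (∑ b, ∑ c, (∑ a, r a b c) * Real.logb 2 (∑ a, r a b c))
    ≤ (∑ a, ∑ b, ∑ c, r a b c * Real.logb 2 (r a b c))
      + (∑ c, (∑ a, ∑ b, r a b c) * Real.logb 2 (∑ a, ∑ b, r a b c)) := by
  classical
  have hlog2 : 0 < Real.log 2 := Real.log_pos one_lt_two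
  have hA0 : ∀ a c, 0 ≤ ∑ b, r a b c := fun a c => Finset.sum_nonneg fun b _ => h0 a b c
  have hB0 : ∀ b c, 0 ≤ ∑ a, r a b c := fun b c => Finset.sum_nonneg fun a _ => h0 a b c
  have hC0 : ∀ c, 0 ≤ ∑ a, ∑ b, r a b c := fun c => Finset.sum_nonneg fun a _ => hA0 a c
  have hrA : ∀ a b c, r a b c ≤ ∑ b', r a b' c :=
    fun a b c => Finset.single_le_sum (fun b' _ => h0 a b' c) (Finset.mem_univ b)
  have hrB : ∀ a b c, r a b c ≤ ∑ a', r a' b c :=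
    fun a b c => Finset.single_le_sum (fun a' _ => h0 a' b c) (Finset.mem_univ a)
  have hrC : ∀ a b c, r a b c ≤ ∑ a', ∑ b', r a' b' c := fun a b c =>
    le_trans (hrA a b c) (Finset.single_le_sum (fun a' _ => hA0 a' c) (Finset.mem_univ a))
  have hC1 : ∑ c, ∑ a, ∑ b, r a b c = 1 := by rw [← sum3_rot r]; exact h1
  -- rewrite marginal entropy-sums as triple sums
  have hSA : (∑ a, ∑ c, (∑ b, r a b c) * Real.logb 2 (∑ b, r a b c))
      = ∑ a, ∑ b, ∑ c, r a b c * Real.logb 2 (∑ b', r a b' c) := by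
    refine Finset.sum_congr rfl fun a _ => ?_
    conv_rhs => rw [Finset.sum_comm]
    exact Finset.sum_congr rfl fun c _ => Finset.sum_mul _ _ _
  have hSB : (∑ b, ∑ c, (∑ a, r a b c) * Real.logb 2 (∑ a, r a b c))
      = ∑ a, ∑ b, ∑ c, r a b c * Real.logb 2 (∑ a', r a' b c) := by
    rw [Finset.sum_congr rfl fun b (_ : b ∈ Finset.univ) =>
      Finset.sum_congr rfl fun c _ => Finset.sum_mul _ _ (Real.logb 2 (∑ a, r a b c))]
    exact sum3_rot (fun b c a => r a b c * Real.logb 2 (∑ a', r a' b c))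
  have hSC : (∑ c, (∑ a, ∑ b, r a b c) * Real.logb 2 (∑ a, ∑ b, r a b c))
      = ∑ a, ∑ b, ∑ c, r a b c * Real.logb 2 (∑ a', ∑ b', r a' b' c) := by
    rw [sum3_rot (fun a b c => r a b c * Real.logb 2 (∑ a', ∑ b', r a' b' c))]
    refine Finset.sum_congr rfl fun c _ => ?_
    rw [Finset.sum_mul]
    exact Finset.sum_congr rfl fun a _ => Finset.sum_mul _ _ _
  -- termwise Gibbs bound
  have main : ∀ a b c,
      r a b c * Real.logb 2 (∑ b', r a b' c) + r a b c * Real.logb 2 (∑ a', r a' b c)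
        - r a b c * Real.logb 2 (r a b c)
        - r a b c * Real.logb 2 (∑ a', ∑ b', r a' b' c)
      ≤ ((if 0 < r a b c then (∑ b', r a b' c) * (∑ a', r a' b c) / (∑ a', ∑ b', r a' b' c)
            else 0) - r a b c) / Real.log 2 :=
    fun a b c => gibbs_term (h0 a b c) (hrA a b c) (hrB a b c) (hrC a b c)
  -- sum of the V-terms is at most 1
  have hVW : ∀ a b c,
      (if 0 < r a b c then (∑ b', r a b' c) * (∑ a', r a' b c) / (∑ a', ∑ b', r a' b' c) else 0)
      ≤ (if 0 < ∑ a', ∑ b', r a' b' c then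
          (∑ b', r a b' c) * (∑ a', r a' b c) / (∑ a', ∑ b', r a' b' c) else 0) := by
    intro a b c
    by_cases hr : 0 < r a b c
    · rw [if_pos hr, if_pos (lt_of_lt_of_le hr (hrC a b c))]
    · rw [if_neg hr]
      split
      · rename_i hcc
        exact div_nonneg (mul_nonneg (hA0 a c) (hB0 b c)) hcc.le
      · exact le_refl 0
  have hW : ∑ a, ∑ b, ∑ c,
      (if 0 < ∑ a', ∑ b', r a' b' c then
        (∑ b', r a b' c) * (∑ a', r a' b c) / (∑ a', ∑ b', r a' b' c) else 0) ≤ 1 := by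
    rw [sum3_rot]
    rw [← hC1]
    refine Finset.sum_le_sum fun c _ => ?_
    by_cases hc : 0 < ∑ a', ∑ b', r a' b' c
    · simp only [if_pos hc]
      have e1 : ∑ a, ∑ b, (∑ b', r a b' c) * (∑ a', r a' b c) / (∑ a', ∑ b', r a' b' c)
          = (∑ a, ∑ b', r a b' c) * (∑ b, ∑ a', r a' b c) / (∑ a', ∑ b', r a' b' c) := by
        conv_rhs => rw [Finset.sum_mul, Finset.sum_div]
        refine Finset.sum_congr rfl fun a _ => ?_
        rw [Finset.mul_sum, Finset.sum_div]
      rw [e1]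
      have e2 : ∑ b, ∑ a', r a' b c = ∑ a', ∑ b', r a' b' c := by rw [Finset.sum_comm]
      rw [e2, mul_div_assoc, div_self hc.ne', mul_one]
    · simp only [if_neg hc]
      simp only [Finset.sum_const_zero]
      exact hC0 c
  have hV : ∑ a, ∑ b, ∑ c,
      (if 0 < r a b c then
        (∑ b', r a b' c) * (∑ a', r a' b c) / (∑ a', ∑ b', r a' b' c) else 0) ≤ 1 := by
    refine le_trans ?_ hW
    refine Finset.sum_le_sum fun a _ => Finset.sum_le_sum fun b _ =>
      Finset.sum_le_sum fun c _ => hVW a b c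
  -- combine
  have sums : ∑ a, ∑ b, ∑ c,
      (r a b c * Real.logb 2 (∑ b', r a b' c) + r a b c * Real.logb 2 (∑ a', r a' b c)
        - r a b c * Real.logb 2 (r a b c)
        - r a b c * Real.logb 2 (∑ a', ∑ b', r a' b' c)) ≤ 0 := by
    have step1 : ∑ a, ∑ b, ∑ c,
        (r a b c * Real.logb 2 (∑ b', r a b' c) + r a b c * Real.logb 2 (∑ a', r a' b c)
          - r a b c * Real.logb 2 (r a b c)
          - r a b c * Real.logb 2 (∑ a', ∑ b', r a' b' c))
        ≤ ∑ a, ∑ b, ∑ c,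
          (((if 0 < r a b c then
              (∑ b', r a b' c) * (∑ a', r a' b c) / (∑ a', ∑ b', r a' b' c) else 0)
            - r a b c) / Real.log 2) :=
      Finset.sum_le_sum fun a _ => Finset.sum_le_sum fun b _ =>
        Finset.sum_le_sum fun c _ => main a b c
    have step2 : ∑ a, ∑ b, ∑ c,
        (((if 0 < r a b c then
            (∑ b', r a b' c) * (∑ a', r a' b c) / (∑ a', ∑ b', r a' b' c) else 0)
          - r a b c) / Real.log 2) ≤ 0 := by
      simp only [sub_div, Finset.sum_sub_distrib, ← Finset.sum_div]
      rw [h1]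
      have := hV
      have h' : (∑ a, ∑ b, ∑ c,
          (if 0 < r a b c then
            (∑ b', r a b' c) * (∑ a', r a' b c) / (∑ a', ∑ b', r a' b' c) else 0)) / Real.log 2
          ≤ 1 / Real.log 2 := div_le_div_of_nonneg_right hV hlog2.le
      linarith
    linarith
  simp only [Finset.sum_add_distrib, Finset.sum_sub_distrib] at sums
  rw [hSA, hSB, hSC]
  linarith

lemma collapse_snd {α β : Type*} [Fintype α] [Fintype β] (F : α × β → ℝ) (b : β)
    {D : ∀ x : α × β, Decidable (x.2 = b)} :
    (∑ x : α × β, if x.2 = b then F x else 0) = ∑ a, F (a, b) := by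
  rw [Fintype.sum_prod_type]
  exact Finset.sum_congr rfl fun a _ => sum_ite_eq_cls' b (fun y => F (a, y))

lemma collapse_13 {α β γ : Type*} [Fintype α] [Fintype β] [Fintype γ]
    (F : α × β × γ → ℝ) (a : α) (c : γ) {D : ∀ x : α × β × γ, Decidable ((x.1, x.2.2) = (a, c))} :
    (∑ x : α × β × γ, if (x.1, x.2.2) = (a, c) then F x else 0) = ∑ b, F (a, b, c) := by
  rw [Fintype.sum_prod_type]
  rw [Finset.sum_eq_single a]
  · rw [Fintype.sum_prod_type]
    refine Finset.sum_congr rfl fun b _ => ?_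
    refine (Finset.sum_eq_single c ?_ ?_).trans (if_pos rfl)
    · intro c' _ hc'
      exact if_neg fun h => hc' (congrArg Prod.snd h)
    · intro h; exact absurd (Finset.mem_univ c) h
  · intro a' _ ha'
    apply Finset.sum_eq_zero
    intro y _
    exact if_neg fun h => ha' (congrArg Prod.fst h)
  · intro h; exact absurd (Finset.mem_univ a) h

lemma collapse_3 {α β γ : Type*} [Fintype α] [Fintype β] [Fintype γ]
    (F : α × β × γ → ℝ) (c : γ) {D : ∀ x : α × β × γ, Decidable (x.2.2 = c)} :
    (∑ x : α × β × γ, if x.2.2 = c then F x else 0) = ∑ a, ∑ b, F (a, b, c) := by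
  rw [Fintype.sum_prod_type]
  refine Finset.sum_congr rfl fun a _ => ?_
  exact collapse_snd (fun y : β × γ => F (a, y)) c

lemma condH_nonneg (w : Ω → ℝ) (hw : IsPMF w) (X : Ω → α) (Y : Ω → β) :
    0 ≤ condH w X Y := by
  classical
  unfold condH
  set T := fun ω => (X ω, Y ω) with hT
  have hd : ∀ b, dist w Y b = ∑ a, dist w T (a, b) := by
    intro b
    have h1 : dist w Y b = dist w (fun ω => (fun x : α × β => x.2) (T ω)) b := rfl
    rw [h1, dist_comp w T (fun x => x.2) b, collapse_snd (dist w T) b]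
  have key := S_marg_le (fun a b => dist w T (a, b))
    (fun a b => dist_nonneg' w hw.1 T _)
  unfold H
  rw [Fintype.sum_prod_type (f := fun x : α × β =>
    dist w T x * Real.logb 2 (dist w T x))]
  have hd2 : ∑ b, dist w Y b * Real.logb 2 (dist w Y b)
      = ∑ b, (∑ a, dist w T (a, b)) * Real.logb 2 (∑ a, dist w T (a, b)) := by
    refine Finset.sum_congr rfl fun b _ => ?_
    rw [hd b]
  rw [hd2]
  linarith [key]

set_option maxHeartbeats 2000000 in
lemma condMutInfo_nonneg (w : Ω → ℝ) (hw : IsPMF w) (X : Ω → α) (Y : Ω → β) (Z : Ω → γ) :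
    0 ≤ condMutInfo w X Y Z := by
  classical
  unfold condMutInfo condH
  set T := fun ω => (X ω, (Y ω, Z ω)) with hT
  have h0 : ∀ a b c, 0 ≤ dist w T (a, (b, c)) := fun a b c => dist_nonneg' w hw.1 T _
  have h1 : ∑ a, ∑ b, ∑ c, dist w T (a, (b, c)) = 1 := by
    have hs := sum_dist w hw.2 T
    rw [Fintype.sum_prod_type] at hs
    rw [← hs]
    exact Finset.sum_congr rfl fun a _ => (Fintype.sum_prod_type (fun y : β × γ => IT.dist w T (a, y))).symm
  have key := gibbs3 (fun a b c => dist w T (a, (b, c))) h0 h1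
  -- marginals
  have hXZ : ∀ a c, dist w (fun ω => (X ω, Z ω)) (a, c) = ∑ b, dist w T (a, (b, c)) := by
    intro a c
    have h' : dist w (fun ω => (X ω, Z ω)) (a, c)
        = dist w (fun ω => (fun x : α × β × γ => (x.1, x.2.2)) (T ω)) (a, c) := rfl
    rw [h', dist_comp w T (fun x => (x.1, x.2.2)) (a, c)]
    exact collapse_13 (dist w T) a c
  have hYZ : ∀ b c, dist w (fun ω => (Y ω, Z ω)) (b, c) = ∑ a, dist w T (a, (b, c)) := by
    intro b c
    have h' : dist w (fun ω => (Y ω, Z ω)) (b, c)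
        = dist w (fun ω => (fun x : α × β × γ => x.2) (T ω)) (b, c) := rfl
    rw [h', dist_comp w T (fun x => x.2) (b, c)]
    exact collapse_snd (dist w T) (b, c)
  have hZ : ∀ c, dist w Z c = ∑ a, ∑ b, dist w T (a, (b, c)) := by
    intro c
    have h' : dist w Z c = dist w (fun ω => (fun x : α × β × γ => x.2.2) (T ω)) c := rfl
    rw [h', dist_comp w T (fun x => x.2.2) c]
    exact collapse_3 (dist w T) c
  unfold H
  -- rewrite the four sums
  have eT : ∑ x : α × β × γ, dist w T x * Real.logb 2 (dist w T x)
      = ∑ a, ∑ b, ∑ c, dist w T (a, (b, c)) * Real.logb 2 (dist w T (a, (b, c))) := by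
    rw [Fintype.sum_prod_type]
    exact Finset.sum_congr rfl fun a _ => Fintype.sum_prod_type _
  have eXZ : ∑ p : α × γ, dist w (fun ω => (X ω, Z ω)) p
        * Real.logb 2 (dist w (fun ω => (X ω, Z ω)) p)
      = ∑ a, ∑ c, (∑ b, dist w T (a, (b, c)))
        * Real.logb 2 (∑ b, dist w T (a, (b, c))) := by
    rw [Fintype.sum_prod_type]
    exact Finset.sum_congr rfl fun a _ => Finset.sum_congr rfl fun c _ => by rw [hXZ a c]
  have eYZ : ∑ p : β × γ, dist w (fun ω => (Y ω, Z ω)) p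
        * Real.logb 2 (dist w (fun ω => (Y ω, Z ω)) p)
      = ∑ b, ∑ c, (∑ a, dist w T (a, (b, c)))
        * Real.logb 2 (∑ a, dist w T (a, (b, c))) := by
    rw [Fintype.sum_prod_type]
    exact Finset.sum_congr rfl fun b _ => Finset.sum_congr rfl fun c _ => by rw [hYZ b c]
  have eZ : ∑ c, dist w Z c * Real.logb 2 (dist w Z c)
      = ∑ c, (∑ a, ∑ b, dist w T (a, (b, c)))
        * Real.logb 2 (∑ a, ∑ b, dist w T (a, (b, c))) := by
    exact Finset.sum_congr rfl fun c _ => by rw [hZ c]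
  rw [eXZ, eYZ, eZ]
  have eT2 : (∑ x : α × (β × γ), dist w T x * Real.logb 2 (dist w T x))
      = ∑ a, ∑ b, ∑ c, dist w T (a, (b, c)) * Real.logb 2 (dist w T (a, (b, c))) := eT
  rw [eT2]
  linarith [key]

lemma H_unit (w : Ω → ℝ) (hw : ∑ ω, w ω = 1) : H w (fun _ => ()) = 0 := by
  classical
  have hd : dist w (fun _ : Ω => ()) () = 1 := by
    unfold IT.dist; simpa using hw
  unfold H
  rw [Fintype.sum_unique]
  rw [show (default : Unit) = () from rfl, hd]
  simp

lemma condH_le_H (w : Ω → ℝ) (hw : IsPMF w) (Y : Ω → β) (Z : Ω → γ) :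
    condH w Y Z ≤ H w Y := by
  have h := condMutInfo_nonneg w hw Y Z (fun _ => ())
  unfold condMutInfo at h
  have e1 : condH w Y (fun _ : Ω => ()) = H w Y := by
    unfold condH
    rw [H_unit w hw.2, sub_zero]
    exact H_comp_inj w Y (fun y => (y, ())) (fun y y' hh => congrArg Prod.fst hh)
  have e2 : condH w Y (fun ω => (Z ω, ())) = condH w Y Z := by
    unfold condH
    have g1 : H w (fun ω => (Z ω, ())) = H w Z :=
      H_comp_inj w Z (fun z => (z, ())) (fun z z' hh => congrArg Prod.fst hh)
    have g2 : H w (fun ω => (Y ω, (Z ω, ()))) = H w (fun ω => (Y ω, Z ω)) :=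
      H_comp_inj w (fun ω => (Y ω, Z ω)) (fun q => (q.1, (q.2, ())))
        (fun q q' hh => by
          obtain ⟨y, z⟩ := q; obtain ⟨y', z'⟩ := q'
          simp only [Prod.ext_iff] at hh ⊢
          exact ⟨hh.1, hh.2.1⟩)
    rw [g1, g2]
  rw [e1, e2] at h
  linarith

lemma condH_comp_le (w : Ω → ℝ) (hw : IsPMF w) (X : Ω → α) (Y : Ω → β) (h : β → γ) :
    condH w X Y ≤ condH w X (fun ω => h (Y ω)) := by
  have hm := condMutInfo_nonneg w hw X Y (fun ω => h (Y ω))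
  unfold condMutInfo at hm
  have e : condH w X (fun ω => (Y ω, h (Y ω))) = condH w X Y := by
    unfold condH
    have g1 : H w (fun ω => (Y ω, h (Y ω))) = H w Y :=
      H_comp_inj w Y (fun y => (y, h y)) (fun y y' hh => congrArg Prod.fst hh)
    have g2 : H w (fun ω => (X ω, (Y ω, h (Y ω)))) = H w (fun ω => (X ω, Y ω)) :=
      H_comp_inj w (fun ω => (X ω, Y ω)) (fun q => (q.1, (q.2, h q.2)))
        (fun q q' hh => by
          obtain ⟨x, y⟩ := q; obtain ⟨x', y'⟩ := q'
          simp only [Prod.ext_iff] at hh ⊢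
          exact ⟨hh.1, hh.2.1⟩)
    rw [g1, g2]
  rw [e] at hm
  linarith

lemma condMutInfo_le_H (w : Ω → ℝ) (hw : IsPMF w) (X : Ω → α) (Y : Ω → β) (Z : Ω → γ) :
    condMutInfo w X Y Z ≤ H w Y := by
  have swap : condMutInfo w X Y Z
      = condH w Y Z - condH w Y (fun ω => (X ω, Z ω)) := by
    unfold condMutInfo condH
    have g : H w (fun ω => (Y ω, (X ω, Z ω))) = H w (fun ω => (X ω, (Y ω, Z ω))) :=
      H_comp_inj w (fun ω => (X ω, (Y ω, Z ω))) (fun q => (q.2.1, (q.1, q.2.2)))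
        (fun q q' hh => by
          obtain ⟨a, b, c⟩ := q; obtain ⟨a', b', c'⟩ := q'
          simp only [Prod.ext_iff] at hh ⊢
          exact ⟨hh.2.1, hh.1, hh.2.2⟩)
    rw [← g]
    ring
  rw [swap]
  have h1 := condH_nonneg w hw Y (fun ω => (X ω, Z ω))
  have h2 := condH_le_H w hw Y Z
  linarith

def pairFunEquiv (n : ℕ) (A B : Type*) : ((Fin n → A) × (Fin n → B)) ≃ (Fin n → A × B) where
  toFun uv := fun t => (uv.1 t, uv.2 t)
  invFun f := (fun t => (f t).1, fun t => (f t).2)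
  left_inv uv := rfl
  right_inv f := rfl

end CRB

open CRB

/-- **Converse rate bound at node 1 for cooperative lossless transmission of `X1`:**
`H(J1) ≥ n·H(X1|X2) − H(X₁ⁿ | X̂ⁿ)` whenever `J2 = f2(X₂ⁿ, J1)` and `X̂ⁿ = g(J1, J2)`. -/
theorem converse_rate_bound_node1
    {X1 X2 : Type} [Fintype X1] [Fintype X2]
    (p : X1 × X2 → ℝ) (hp : IsPMF p)
    {n : ℕ} {Ω : Type} [Fintype Ω] (w : Ω → ℝ) (hw : IsPMF w)
    (X1n : Ω → Fin n → X1) (X2n : Ω → Fin n → X2)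
    -- the pair (X₁ⁿ, X₂ⁿ) consists of n i.i.d. copies of p
    (hlaw : ∀ f : Fin n → X1 × X2,
      IT.pr w (fun ω => (fun t => (X1n ω t, X2n ω t)) = f) = ∏ t, p (f t))
    {A B : Type} [Fintype A] [Fintype B]
    (J1 : Ω → A) (f2 : (Fin n → X2) → A → B) (g : A → B → Fin n → X1) :
    (n : ℝ) * IT.condH p (fun a => a.1) (fun a => a.2) -
        IT.condH w X1n (fun ω => g (J1 ω) (f2 (X2n ω) (J1 ω))) ≤
      IT.H w J1 := by
  classical
  set P : Ω → Fin n → X1 × X2 := fun ω => fun t => (X1n ω t, X2n ω t) with hP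
  have hdistP : ∀ f, dist w P f = ∏ t, p (f t) := by
    intro f
    rw [← hlaw f]
    rfl
  set q2 : X2 → ℝ := fun b => ∑ a, p (a, b) with hq2def
  have hq2pmf : IsPMF q2 := by
    constructor
    · exact fun b => Finset.sum_nonneg fun a _ => hp.1 _
    · rw [show (∑ b, q2 b) = ∑ b, ∑ a, p (a, b) from rfl, Finset.sum_comm, ← hp.2]
      exact (Fintype.sum_prod_type p).symm
  -- H w (X1n, X2n) = H w P
  have hH12 : H w (fun ω => (X1n ω, X2n ω)) = H w P :=
    H_comp_inj w P (fun f => (fun t => (f t).1, fun t => (f t).2))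
      (fun f f' hff => funext fun t => Prod.ext
        (congrFun (congrArg Prod.fst hff) t) (congrFun (congrArg Prod.snd hff) t))
  -- H w P = -(n * S_p)
  have hHP : H w P = -((n : ℝ) * ∑ x, p x * Real.logb 2 (p x)) := by
    unfold H
    rw [Finset.sum_congr rfl (fun f (_ : f ∈ Finset.univ) => by rw [hdistP f])]
    rw [S_iid hp n]
  -- dist of X2n is iid q2
  have hdist2 : ∀ y, dist w X2n y = ∏ t, q2 (y t) := by
    intro y
    have h' : dist w X2n y
        = dist w (fun ω => (fun f : Fin n → X1 × X2 => fun t => (f t).2) (P ω)) y := rfl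
    rw [h', dist_comp w P (fun f => fun t => (f t).2) y]
    simp only [hdistP]
    rw [← Equiv.sum_comp (pairFunEquiv n X1 X2)
      (fun f => if (fun t => (f t).2) = y then ∏ t, p (f t) else 0)]
    rw [Fintype.sum_prod_type]
    have inner : ∀ u : Fin n → X1,
        (∑ v : Fin n → X2, if (fun t => ((pairFunEquiv n X1 X2) (u, v) t).2) = y
            then ∏ t, p ((pairFunEquiv n X1 X2) (u, v) t) else 0)
        = ∏ t, p (u t, y t) := by
      intro u
      refine (Finset.sum_eq_single y ?_ ?_).trans (if_pos rfl)
      · intro v _ hv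
        exact if_neg hv
      · intro hy; exact absurd (Finset.mem_univ y) hy
    rw [Finset.sum_congr rfl fun u _ => inner u]
    rw [show (∏ t, q2 (y t)) = ∏ t, ∑ a, p (a, y t) from rfl]
    rw [Finset.prod_univ_sum (fun _ => Finset.univ) (fun t a => p (a, y t))]
    rw [Fintype.piFinset_univ]
  have hH2 : H w X2n = -((n : ℝ) * ∑ b, q2 b * Real.logb 2 (q2 b)) := by
    unfold H
    rw [Finset.sum_congr rfl (fun y (_ : y ∈ Finset.univ) => by rw [hdist2 y])]
    rw [S_iid hq2pmf n]
  -- single-letter conditional entropy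
  have hdp : ∀ x : X1 × X2, dist p (fun a => (a.1, a.2)) x = p x := by
    intro x
    unfold IT.dist
    refine (Finset.sum_eq_single x ?_ ?_).trans (if_pos rfl)
    · intro y _ hy; exact if_neg hy
    · intro hx; exact absurd (Finset.mem_univ x) hx
  have hdsnd : ∀ b, dist p (fun a : X1 × X2 => a.2) b = q2 b := by
    intro b
    unfold IT.dist
    exact collapse_snd p b
  have hcond1 : condH p (fun a => a.1) (fun a => a.2)
      = -(∑ x, p x * Real.logb 2 (p x)) + ∑ b, q2 b * Real.logb 2 (q2 b) := by
    unfold condH H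
    have e1 : ∑ x : X1 × X2, dist p (fun a => (a.1, a.2)) x
          * Real.logb 2 (dist p (fun a => (a.1, a.2)) x)
        = ∑ x, p x * Real.logb 2 (p x) :=
      Finset.sum_congr rfl fun x _ => by rw [hdp x]
    have e2 : ∑ b, dist p (fun a : X1 × X2 => a.2) b
          * Real.logb 2 (dist p (fun a : X1 × X2 => a.2) b)
        = ∑ b, q2 b * Real.logb 2 (q2 b) :=
      Finset.sum_congr rfl fun b _ => by rw [hdsnd b]
    rw [e1, e2]
    ring
  have hcond : (n : ℝ) * condH p (fun a => a.1) (fun a => a.2) = condH w X1n X2n := by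
    rw [hcond1]
    unfold condH
    rw [hH12, hHP, hH2]
    ring
  -- inequalities
  have step2 : condH w X1n (fun ω => (J1 ω, X2n ω))
      ≤ condH w X1n (fun ω => g (J1 ω) (f2 (X2n ω) (J1 ω))) :=
    condH_comp_le w hw X1n (fun ω => (J1 ω, X2n ω)) (fun q => g q.1 (f2 q.2 q.1))
  have step3 : condMutInfo w X1n J1 X2n ≤ H w J1 := condMutInfo_le_H w hw X1n J1 X2n
  have expand : condMutInfo w X1n J1 X2n
      = condH w X1n X2n - condH w X1n (fun ω => (J1 ω, X2n ω)) := rfl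
  linarith
end
end

section
/- (Single-letterization identity for memoryless sources.) Let J be any random variable taking finitely many values, jointly distributed with (X_1^n, X_2^n). Then I(J; X_2^n | X_1^n) = ∑_{t=1}^n I(J, X_{1,[1:t-1]}, X_{1,[t+1:n]}, X_{2,[1:t-1]} ; X_{2,t} | X_{1,t}). -/
noncomputable section

section AuxSL
open IT
variable {Ω : Type*} [Fintype Ω]

omit [Fintype Ω] in
lemma SL.nonempty_of_pmf {w : Ω → ℝ} [Fintype Ω] (hw : IsPMF w) : Nonempty Ω := by
  by_contra h
  rw [not_nonempty_iff] at h
  have h0 : (∑ ω, w ω) = 0 := by simp [Finset.univ_eq_empty]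
  rw [hw.2] at h0
  norm_num at h0

lemma SL.dist_sum {α : Type*} [Fintype α] (w : Ω → ℝ) (X : Ω → α) :
    ∑ a, IT.dist w X a = ∑ ω, w ω := by
  classical
  unfold IT.dist
  rw [Finset.sum_comm]
  refine Finset.sum_congr rfl fun ω _ => ?_
  simp

lemma SL.H_congr {α : Type*} [Fintype α] (w : Ω → ℝ) {X Y : Ω → α} (h : ∀ ω, X ω = Y ω) :
    H w X = H w Y := by
  have : X = Y := funext h
  rw [this]

lemma SL.H_comp_inj {α β : Type*} [Fintype α] [Fintype β] (w : Ω → ℝ) (X : Ω → α)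
    (g : α → β) (hg : Function.Injective g) :
    H w (fun ω => g (X ω)) = H w X := by
  classical
  unfold IT.H
  congr 1
  have hd : ∀ a, IT.dist w (fun ω => g (X ω)) (g a) = IT.dist w X a := by
    intro a
    unfold IT.dist
    refine Finset.sum_congr rfl fun ω _ => ?_
    simp [hg.eq_iff]
  have h0 : ∀ b, b ∉ Finset.univ.image g → IT.dist w (fun ω => g (X ω)) b = 0 := by
    intro b hb
    unfold IT.dist
    refine Finset.sum_eq_zero fun ω _ => ?_
    rw [if_neg]
    exact fun h => hb (Finset.mem_image.mpr ⟨X ω, Finset.mem_univ _, h⟩)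
  calc ∑ b, IT.dist w (fun ω => g (X ω)) b * Real.logb 2 (IT.dist w (fun ω => g (X ω)) b)
      = ∑ b ∈ Finset.univ.image g,
          IT.dist w (fun ω => g (X ω)) b * Real.logb 2 (IT.dist w (fun ω => g (X ω)) b) := by
        refine (Finset.sum_subset (Finset.subset_univ _) fun b _ hb => ?_).symm
        rw [h0 b hb]; simp
    _ = ∑ a, IT.dist w (fun ω => g (X ω)) (g a) *
          Real.logb 2 (IT.dist w (fun ω => g (X ω)) (g a)) :=
        Finset.sum_image fun a _ b _ h => hg h
    _ = ∑ a, IT.dist w X a * Real.logb 2 (IT.dist w X a) := by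
        refine Finset.sum_congr rfl fun a _ => ?_; rw [hd]

lemma SL.H_eq_of_inv {α β : Type*} [Fintype α] [Fintype β] (w : Ω → ℝ) (X : Ω → α) (Y : Ω → β)
    (f : α → β) (g : β → α) (hf : ∀ ω, Y ω = f (X ω)) (hg : ∀ ω, X ω = g (Y ω)) :
    H w X = H w Y := by
  have h1 : H w (fun ω => (X ω, Y ω)) = H w X := by
    have e := SL.H_comp_inj w X (fun a => (a, f a)) (fun a b h => congrArg Prod.fst h)
    rw [← e]
    exact SL.H_congr w fun ω => by simp [hf ω]
  have h2 : H w (fun ω => (X ω, Y ω)) = H w Y := by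
    have e := SL.H_comp_inj w Y (fun b => (g b, b)) (fun a b h => congrArg Prod.snd h)
    rw [← e]
    exact SL.H_congr w fun ω => by simp [hg ω]
  rw [← h1, h2]

lemma SL.condH_congr_right {α β γ : Type*} [Fintype α] [Fintype β] [Fintype γ]
    (w : Ω → ℝ) (X : Ω → α) (Y : Ω → β) (Y' : Ω → γ)
    (f : β → γ) (g : γ → β) (hf : ∀ ω, Y' ω = f (Y ω)) (hg : ∀ ω, Y ω = g (Y' ω)) :
    condH w X Y = condH w X Y' := by
  unfold IT.condH
  have h1 : H w Y = H w Y' := SL.H_eq_of_inv w Y Y' f g hf hg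
  have h2 : H w (fun ω => (X ω, Y ω)) = H w (fun ω => (X ω, Y' ω)) :=
    SL.H_eq_of_inv w _ _ (fun z => (z.1, f z.2)) (fun z => (z.1, g z.2))
      (fun ω => by simp [hf ω]) (fun ω => by simp [hg ω])
  rw [h1, h2]

lemma SL.condMutInfo_swap {α β γ : Type*} [Fintype α] [Fintype β] [Fintype γ] (w : Ω → ℝ)
    (X : Ω → α) (Y : Ω → β) (Z : Ω → γ) :
    condMutInfo w X Y Z = condH w Y Z - condH w Y (fun ω => (X ω, Z ω)) := by
  unfold IT.condMutInfo IT.condH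
  have h : H w (fun ω => (X ω, (Y ω, Z ω))) = H w (fun ω => (Y ω, (X ω, Z ω))) :=
    SL.H_eq_of_inv w _ _ (fun z => (z.2.1, (z.1, z.2.2))) (fun z => (z.2.1, (z.1, z.2.2)))
      (fun ω => rfl) (fun ω => rfl)
  linarith

lemma SL.condH_chain {β γ : Type*} [Fintype β] [Fintype γ] [Nonempty β] (w : Ω → ℝ) {n : ℕ}
    (Y : Ω → Fin n → β) (Z : Ω → γ) :
    condH w Y Z = ∑ t : Fin n, condH w (fun ω => Y ω t)
      (fun ω => (below t.val (Y ω), Z ω)) := by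
  classical
  inhabit β
  set f : ℕ → ℝ := fun k => H w (fun ω => (below k (Y ω), Z ω)) with hfdef
  have h0 : f 0 = H w Z := by
    refine SL.H_eq_of_inv w _ _ (fun z => z.2) (fun z => (fun _ => none, z)) (fun ω => rfl) ?_
    intro ω
    have : below 0 (Y ω) = fun _ : Fin n => (none : Option β) := by
      funext s; simp [below]
    simp [this]
  have hn : f n = H w (fun ω => (Y ω, Z ω)) := by
    refine SL.H_eq_of_inv w _ _
      (fun z => (fun s => (z.1 s).getD default, z.2))
      (fun z => (below n z.1, z.2)) ?_ ?_
    · intro ω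
      have : (fun s => ((below n (Y ω)) s).getD default) = Y ω := by
        funext s; simp [below, s.isLt]
      simp [this]
    · intro ω; rfl
  have hstep : ∀ k (hk : k < n), f (k + 1) - f k
      = condH w (fun ω => Y ω ⟨k, hk⟩) (fun ω => (below k (Y ω), Z ω)) := by
    intro k hk
    have h1 : f (k + 1) = H w (fun ω => (Y ω ⟨k, hk⟩, (below k (Y ω), Z ω))) := by
      refine SL.H_eq_of_inv w _ _
        (fun z => ((z.1 ⟨k, hk⟩).getD default,
          (fun s => if s.val < k then z.1 s else none, z.2)))
        (fun z => (fun s => if s.val = k then some z.1 else z.2.1 s, z.2.2)) ?_ ?_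
      · intro ω
        refine Prod.ext ?_ (Prod.ext ?_ rfl)
        · simp [below, Nat.lt_succ_iff]
        · funext s
          by_cases hs : s.val < k
          · simp [below, hs, Nat.lt_succ_of_lt hs]
          · simp [below, hs]
      · intro ω
        refine Prod.ext ?_ rfl
        funext s
        by_cases hs : s.val = k
        · have hs' : s = ⟨k, hk⟩ := Fin.ext hs
          simp [below, hs, hs', Nat.lt_succ_iff]
        · have : s.val < k + 1 ↔ s.val < k := by omega
          simp [below, hs, this]
    rw [h1]
    unfold IT.condH
    rw [hfdef]
  calc condH w Y Z = f n - f 0 := by rw [h0, hn]; unfold IT.condH; rfl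
    _ = ∑ k ∈ Finset.range n, (f (k+1) - f k) := (Finset.sum_range_sub f n).symm
    _ = ∑ t : Fin n, condH w (fun ω => Y ω t) (fun ω => (below t.val (Y ω), Z ω)) := by
      rw [Finset.sum_range fun k => _]
      · exact Finset.sum_congr rfl fun t _ => by rw [hstep t.val t.isLt]

lemma SL.H_pair_of_indep {α β : Type*} [Fintype α] [Fintype β] (w : Ω → ℝ)
    (hw1 : ∑ ω, w ω = 1) (X : Ω → α) (Y : Ω → β)
    (h : ∀ a b, IT.dist w (fun ω => (X ω, Y ω)) (a, b) = IT.dist w X a * IT.dist w Y b) :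
    H w (fun ω => (X ω, Y ω)) = H w X + H w Y := by
  classical
  have hA : ∑ a, IT.dist w X a = 1 := by rw [SL.dist_sum w X, hw1]
  have hB : ∑ b, IT.dist w Y b = 1 := by rw [SL.dist_sum w Y, hw1]
  unfold IT.H
  rw [Fintype.sum_prod_type]
  have key : ∀ a b, IT.dist w (fun ω => (X ω, Y ω)) (a, b) *
        Real.logb 2 (IT.dist w (fun ω => (X ω, Y ω)) (a, b))
      = IT.dist w Y b * (IT.dist w X a * Real.logb 2 (IT.dist w X a))
        + IT.dist w X a * (IT.dist w Y b * Real.logb 2 (IT.dist w Y b)) := by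
    intro a b
    rw [h a b]
    by_cases ha : IT.dist w X a = 0
    · simp [ha]
    by_cases hb : IT.dist w Y b = 0
    · simp [hb]
    rw [Real.logb_mul ha hb]; ring
  calc -∑ a, ∑ b, IT.dist w (fun ω => (X ω, Y ω)) (a, b) *
          Real.logb 2 (IT.dist w (fun ω => (X ω, Y ω)) (a, b))
      = -∑ a, ∑ b, (IT.dist w Y b * (IT.dist w X a * Real.logb 2 (IT.dist w X a))
          + IT.dist w X a * (IT.dist w Y b * Real.logb 2 (IT.dist w Y b))) := by
        congr 1
        exact Finset.sum_congr rfl fun a _ => Finset.sum_congr rfl fun b _ => key a b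
    _ = -(∑ a, IT.dist w X a * Real.logb 2 (IT.dist w X a))
        + -(∑ b, IT.dist w Y b * Real.logb 2 (IT.dist w Y b)) := by
        simp only [Finset.sum_add_distrib, ← Finset.sum_mul, ← Finset.mul_sum, hA, hB]
        ring_nf
    _ = _ := rfl

lemma SL.sum_pi_prod_one {ι : Type*} [Fintype ι] [DecidableEq ι] {α : Type*} [Fintype α]
    (p : α → ℝ) (hp : ∑ a, p a = 1) : ∑ y : ι → α, ∏ i, p (y i) = 1 := by
  classical
  have h := (Finset.prod_univ_sum (fun _ : ι => (Finset.univ : Finset α)) (fun _ a => p a)).symm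
  rw [Fintype.piFinset_univ] at h
  rw [h]
  simp [hp]

end AuxSL

section AuxSL2
open IT
variable {Ω : Type*} [Fintype Ω] {X1 X2 : Type} [Fintype X1] [Fintype X2]

lemma SL.dist_transfer {n : ℕ} (p : X1 × X2 → ℝ) (w : Ω → ℝ)
    (X1n : Ω → Fin n → X1) (X2n : Ω → Fin n → X2)
    (hlaw : ∀ f : Fin n → X1 × X2,
      IT.pr w (fun ω => (fun t => (X1n ω t, X2n ω t)) = f) = ∏ t, p (f t))
    {β : Type*} [Fintype β] (G : (Fin n → X1 × X2) → β) (b : β) :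
    IT.dist w (fun ω => G (fun t => (X1n ω t, X2n ω t))) b = IT.dist (iidW p n) G b := by
  classical
  unfold IT.dist iidW
  calc ∑ ω, (if G (fun t => (X1n ω t, X2n ω t)) = b then w ω else 0)
      = ∑ ω, ∑ f : Fin n → X1 × X2,
          (if G f = b then (if (fun t => (X1n ω t, X2n ω t)) = f then w ω else 0) else 0) := by
        refine Finset.sum_congr rfl fun ω _ => ?_
        rw [Finset.sum_eq_single (fun t => (X1n ω t, X2n ω t))]
        · split <;> simp
        · intro f _ hf
          have h2 : (fun t => (X1n ω t, X2n ω t)) ≠ f := fun h => hf h.symm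
          simp [h2]
        · simp
    _ = ∑ f : Fin n → X1 × X2, ∑ ω,
          (if G f = b then (if (fun t => (X1n ω t, X2n ω t)) = f then w ω else 0) else 0) :=
        Finset.sum_comm
    _ = ∑ f : Fin n → X1 × X2, (if G f = b then ∏ t, p (f t) else 0) := by
        refine Finset.sum_congr rfl fun f _ => ?_
        rw [← hlaw f]
        unfold IT.pr
        split
        · exact Finset.sum_congr rfl fun ω _ => by congr
        · simp

lemma SL.H_transfer {n : ℕ} (p : X1 × X2 → ℝ) (w : Ω → ℝ)
    (X1n : Ω → Fin n → X1) (X2n : Ω → Fin n → X2)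
    (hlaw : ∀ f : Fin n → X1 × X2,
      IT.pr w (fun ω => (fun t => (X1n ω t, X2n ω t)) = f) = ∏ t, p (f t))
    {β : Type*} [Fintype β] (G : (Fin n → X1 × X2) → β) (Xf : Ω → β)
    (hX : ∀ ω, Xf ω = G (fun t => (X1n ω t, X2n ω t))) :
    H w Xf = H (iidW p n) G := by
  have hd : ∀ b, IT.dist w Xf b = IT.dist (iidW p n) G b := by
    intro b
    have : Xf = fun ω => G (fun t => (X1n ω t, X2n ω t)) := funext hX
    rw [this]
    exact SL.dist_transfer p w X1n X2n hlaw G b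
  unfold IT.H
  congr 1
  exact Finset.sum_congr rfl fun b _ => by rw [hd b]

lemma SL.condH_transfer {n : ℕ} (p : X1 × X2 → ℝ) (w : Ω → ℝ)
    (X1n : Ω → Fin n → X1) (X2n : Ω → Fin n → X2)
    (hlaw : ∀ f : Fin n → X1 × X2,
      IT.pr w (fun ω => (fun t => (X1n ω t, X2n ω t)) = f) = ∏ t, p (f t))
    {β γ : Type*} [Fintype β] [Fintype γ]
    (G : (Fin n → X1 × X2) → β) (G' : (Fin n → X1 × X2) → γ)
    (Xf : Ω → β) (Yf : Ω → γ)
    (hX : ∀ ω, Xf ω = G (fun t => (X1n ω t, X2n ω t)))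
    (hY : ∀ ω, Yf ω = G' (fun t => (X1n ω t, X2n ω t))) :
    condH w Xf Yf = condH (iidW p n) G G' := by
  unfold IT.condH
  rw [SL.H_transfer p w X1n X2n hlaw (fun f => (G f, G' f)) (fun ω => (Xf ω, Yf ω))
      (fun ω => by show (Xf ω, Yf ω) = _; rw [hX ω, hY ω]),
    SL.H_transfer p w X1n X2n hlaw G' Yf hY]

lemma SL.iid_indep {n : ℕ} (p : X1 × X2 → ℝ) (hp : IsPMF p) [Nonempty (X1 × X2)]
    (t : Fin n)
    {γ β : Type*} [Fintype γ] [Fintype β] (g : X1 × X2 → γ)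
    (R : (Fin n → X1 × X2) → β)
    (hR : ∀ x y : Fin n → X1 × X2, (∀ s, s ≠ t → x s = y s) → R x = R y)
    (c : γ) (b : β) :
    IT.dist (iidW p n) (fun x => (g (x t), R x)) (c, b) =
      IT.dist (iidW p n) (fun x => g (x t)) c * IT.dist (iidW p n) R b := by
  classical
  let e := Equiv.piSplitAt t (fun _ : Fin n => X1 × X2)
  set a0 : X1 × X2 := Classical.arbitrary _ with ha0
  set S : ({ j // j ≠ t } → X1 × X2) → β := fun y => R (e.symm (a0, y)) with hSdef
  have hcoord : ∀ (a : X1 × X2) y, e.symm (a, y) t = a := by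
    intro a y; simp [e, Equiv.piSplitAt]
  have hoff : ∀ (a : X1 × X2) y (s : Fin n) (hs : s ≠ t), e.symm (a, y) s = y ⟨s, hs⟩ := by
    intro a y s hs; simp [e, Equiv.piSplitAt, hs]
  have hRS : ∀ (a : X1 × X2) y, R (e.symm (a, y)) = S y := by
    intro a y
    apply hR
    intro s hs
    rw [hoff a y s hs, hoff a0 y s hs]
  have hprod : ∀ (a : X1 × X2) y,
      ∏ s, p (e.symm (a, y) s) = p a * ∏ u : { j // j ≠ t }, p (y u) := by
    intro a y
    rw [← Finset.mul_prod_erase Finset.univ _ (Finset.mem_univ t)]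
    congr 1
    · rw [hcoord]
    · rw [Finset.prod_subtype (p := fun s => s ≠ t) (Finset.univ.erase t)
        (fun s => by simp) (fun s => p (e.symm (a, y) s))]
      exact Finset.prod_congr rfl fun u _ => by rw [hoff a y u.1 u.2]
  have reindex : ∀ F : (Fin n → X1 × X2) → ℝ,
      ∑ x, F x = ∑ a : X1 × X2, ∑ y : { j // j ≠ t } → X1 × X2, F (e.symm (a, y)) := by
    intro F
    rw [← Equiv.sum_comp e.symm F, Fintype.sum_prod_type]
  unfold IT.dist iidW
  rw [reindex, reindex, reindex]
  have hT : ∑ y : { j // j ≠ t } → X1 × X2, ∏ u : { j // j ≠ t }, p (y u) = 1 :=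
    SL.sum_pi_prod_one p hp.2
  beta_reduce
  trans ((∑ a : X1 × X2, if g a = c then p a else 0) *
      (∑ y : { j // j ≠ t } → X1 × X2,
        if R (e.symm (a0, y)) = b then ∏ u : { j // j ≠ t }, p (y u) else 0))
  · rw [Finset.sum_mul_sum]
    refine Finset.sum_congr rfl fun a _ => Finset.sum_congr rfl fun y _ => ?_
    rw [hcoord a y, hRS a y, hprod a y]
    by_cases h1 : g a = c <;> by_cases h2 : R (e.symm (a0, y)) = b <;>
      simp [h1, h2, Prod.ext_iff, S]
  · congr 1
    · symm
      calc ∑ a : X1 × X2, ∑ y : { j // j ≠ t } → X1 × X2,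
            (if g (e.symm (a, y) t) = c then ∏ s, p (e.symm (a, y) s) else 0)
          = ∑ a : X1 × X2, ∑ y : { j // j ≠ t } → X1 × X2,
            ((if g a = c then p a else 0) * ∏ u : { j // j ≠ t }, p (y u)) := by
            refine Finset.sum_congr rfl fun a _ => Finset.sum_congr rfl fun y _ => ?_
            rw [hcoord a y, hprod a y]
            by_cases h1 : g a = c <;> simp [h1]
        _ = ∑ a : X1 × X2, (if g a = c then p a else 0) := by
            simp only [← Finset.mul_sum, hT, mul_one]
    · symm
      calc ∑ a : X1 × X2, ∑ y : { j // j ≠ t } → X1 × X2,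
            (if R (e.symm (a, y)) = b then ∏ s, p (e.symm (a, y) s) else 0)
          = ∑ a : X1 × X2, ∑ y : { j // j ≠ t } → X1 × X2,
            (p a * if R (e.symm (a0, y)) = b then ∏ u : { j // j ≠ t }, p (y u) else 0) := by
            refine Finset.sum_congr rfl fun a _ => Finset.sum_congr rfl fun y _ => ?_
            rw [hRS a y, hprod a y]
            by_cases h2 : R (e.symm (a0, y)) = b <;> simp [h2, S]
        _ = ∑ y : { j // j ≠ t } → X1 × X2,
            (if R (e.symm (a0, y)) = b then ∏ u : { j // j ≠ t }, p (y u) else 0) := by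
            simp only [← Finset.mul_sum, ← Finset.sum_mul, hp.2, one_mul]

end AuxSL2

section AuxSL3
open IT
variable {Ω : Type*} [Fintype Ω] {X1 X2 : Type} [Fintype X1] [Fintype X2]

lemma SL.memoryless [Nonempty X1] [Nonempty X2]
    {n : ℕ} (p : X1 × X2 → ℝ) (hp : IsPMF p) (w : Ω → ℝ)
    (X1n : Ω → Fin n → X1) (X2n : Ω → Fin n → X2)
    (hlaw : ∀ f : Fin n → X1 × X2,
      IT.pr w (fun ω => (fun t => (X1n ω t, X2n ω t)) = f) = ∏ t, p (f t))
    (t : Fin n) :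
    condH w (fun ω => X2n ω t) (fun ω => (below t.val (X2n ω), X1n ω))
      = condH w (fun ω => X2n ω t) (fun ω => X1n ω t) := by
  classical
  haveI : Nonempty (X1 × X2) := ⟨(Classical.arbitrary X1, Classical.arbitrary X2)⟩
  have hq1 : ∑ x : Fin n → X1 × X2, iidW p n x = 1 := SL.sum_pi_prod_one p hp.2
  have hR : ∀ x y : Fin n → X1 × X2, (∀ s, s ≠ t → x s = y s) →
      ((below t.val (fun s => (x s).2), fun s => if s = t then none else some ((x s).1))
        : (Fin n → Option X2) × (Fin n → Option X1))
      = (below t.val (fun s => (y s).2), fun s => if s = t then none else some ((y s).1)) := by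
    intro x y h
    refine Prod.ext ?_ ?_
    · funext s
      unfold below
      by_cases hs : s.val < t.val
      · have hne : s ≠ t := fun hEq => by rw [hEq] at hs; omega
        simp [hs, h s hne]
      · simp [hs]
    · funext s
      by_cases hs : s = t
      · simp [hs]
      · simp [hs, h s hs]
  have hA : condH w (fun ω => X2n ω t) (fun ω => (below t.val (X2n ω), X1n ω))
      = condH (iidW p n) (fun x => (x t).2)
          (fun x => (below t.val (fun s => (x s).2), fun s => (x s).1)) :=
    SL.condH_transfer p w X1n X2n hlaw _ _ _ _ (fun ω => rfl) (fun ω => rfl)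
  have hB : condH w (fun ω => X2n ω t) (fun ω => X1n ω t)
      = condH (iidW p n) (fun x => (x t).2) (fun x => (x t).1) :=
    SL.condH_transfer p w X1n X2n hlaw _ _ _ _ (fun ω => rfl) (fun ω => rfl)
  rw [hA, hB]
  have hrepar : condH (iidW p n) (fun x => (x t).2)
      (fun x => (below t.val (fun s => (x s).2), fun s => (x s).1))
    = condH (iidW p n) (fun x => (x t).2)
      (fun x => ((x t).1, (below t.val (fun s => (x s).2),
        fun s => if s = t then none else some ((x s).1)))) :=
    SL.condH_congr_right _ _ _ _
      (fun z => (z.2 t, (z.1, fun s => if s = t then none else some (z.2 s))))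
      (fun z => (z.2.1, fun s => if s = t then z.1 else (z.2.2 s).getD (Classical.arbitrary X1)))
      (fun x => rfl)
      (fun x => by
        refine Prod.ext rfl ?_
        funext s
        by_cases hs : s = t
        · simp [hs]
        · simp [hs])
  rw [hrepar]
  have h1 : H (iidW p n) (fun x => ((x t).1,
        (below t.val (fun s => (x s).2), fun s => if s = t then none else some ((x s).1))))
      = H (iidW p n) (fun x => (x t).1) + H (iidW p n) (fun x =>
        ((below t.val (fun s => (x s).2), fun s => if s = t then none else some ((x s).1))
          : (Fin n → Option X2) × (Fin n → Option X1))) :=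
    SL.H_pair_of_indep _ hq1 _ _ (fun a b => SL.iid_indep p hp t Prod.fst _ hR a b)
  have h2 : H (iidW p n) (fun x => ((x t).2, ((x t).1,
        (below t.val (fun s => (x s).2), fun s => if s = t then none else some ((x s).1)))))
      = H (iidW p n) (fun x => (((x t).2, (x t).1),
        (below t.val (fun s => (x s).2), fun s => if s = t then none else some ((x s).1)))) :=
    SL.H_eq_of_inv _ _ _ (fun z => ((z.1, z.2.1), z.2.2)) (fun z => (z.1.1, (z.1.2, z.2)))
      (fun x => rfl) (fun x => rfl)
  have h3 : H (iidW p n) (fun x => (((x t).2, (x t).1),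
        (below t.val (fun s => (x s).2), fun s => if s = t then none else some ((x s).1))))
      = H (iidW p n) (fun x => ((x t).2, (x t).1)) + H (iidW p n) (fun x =>
        ((below t.val (fun s => (x s).2), fun s => if s = t then none else some ((x s).1))
          : (Fin n → Option X2) × (Fin n → Option X1))) :=
    SL.H_pair_of_indep _ hq1 _ _
      (fun a b => SL.iid_indep p hp t (fun u => (u.2, u.1)) _ hR a b)
  have hL : condH (iidW p n) (fun x => (x t).2)
      (fun x => ((x t).1, (below t.val (fun s => (x s).2),
        fun s => if s = t then none else some ((x s).1))))
    = H (iidW p n) (fun x => ((x t).2, ((x t).1,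
        (below t.val (fun s => (x s).2), fun s => if s = t then none else some ((x s).1)))))
      - H (iidW p n) (fun x => ((x t).1,
        (below t.val (fun s => (x s).2), fun s => if s = t then none else some ((x s).1)))) := rfl
  have hRr : condH (iidW p n) (fun x => (x t).2) (fun x => (x t).1)
      = H (iidW p n) (fun x => ((x t).2, (x t).1)) - H (iidW p n) (fun x => (x t).1) := rfl
  rw [hL, hRr]
  linarith [h1, h2, h3]

end AuxSL3

open IT

/-- **Single-letterization identity for memoryless sources:**
`I(J; X₂ⁿ | X₁ⁿ) = ∑_t I(J, X₁_{[1:t-1]}, X₁_{[t+1:n]}, X₂_{[1:t-1]}; X₂_t | X₁_t)`. -/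
theorem single_letterization_identity
    {X1 X2 : Type} [Fintype X1] [Fintype X2]
    (p : X1 × X2 → ℝ) (hp : IsPMF p)
    {n : ℕ} {Ω : Type} [Fintype Ω] (w : Ω → ℝ) (hw : IsPMF w)
    (X1n : Ω → Fin n → X1) (X2n : Ω → Fin n → X2)
    -- the pair (X₁ⁿ, X₂ⁿ) consists of n i.i.d. copies of p
    (hlaw : ∀ f : Fin n → X1 × X2,
      IT.pr w (fun ω => (fun t => (X1n ω t, X2n ω t)) = f) = ∏ t, p (f t))
    {A : Type} [Fintype A] (J : Ω → A) :
    IT.condMutInfo w J X2n X1n =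
      ∑ t : Fin n,
        IT.condMutInfo w
          (fun ω => (J ω, below t.val (X1n ω), above t.val (X1n ω), below t.val (X2n ω)))
          (fun ω => X2n ω t)
          (fun ω => X1n ω t) := by
  classical
  have hOmega : Nonempty Ω := SL.nonempty_of_pmf hw
  rcases Nat.eq_zero_or_pos n with hn | hn
  · subst hn
    rw [Fin.sum_univ_zero]
    unfold IT.condMutInfo
    rw [SL.condH_congr_right w J X1n (fun ω => (X2n ω, X1n ω))
      (fun y => (fun s => s.elim0, y)) Prod.snd
      (fun ω => by
        refine Prod.ext ?_ rfl
        funext s; exact s.elim0)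
      (fun ω => rfl)]
    exact sub_self _
  · haveI hne1 : Nonempty X1 := ⟨X1n (Classical.arbitrary Ω) ⟨0, hn⟩⟩
    haveI hne2 : Nonempty X2 := ⟨X2n (Classical.arbitrary Ω) ⟨0, hn⟩⟩
    rw [SL.condMutInfo_swap w J X2n X1n]
    rw [SL.condH_chain w X2n X1n, SL.condH_chain w X2n (fun ω => (J ω, X1n ω))]
    rw [← Finset.sum_sub_distrib]
    refine Finset.sum_congr rfl fun t _ => ?_
    rw [SL.condMutInfo_swap w _ (fun ω => X2n ω t) (fun ω => X1n ω t)]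
    rw [← SL.memoryless p hp w X1n X2n hlaw t]
    congr 1
    exact SL.condH_congr_right w (fun ω => X2n ω t)
      (fun ω => (below t.val (X2n ω), (J ω, X1n ω)))
      (fun ω => ((J ω, below t.val (X1n ω), above t.val (X1n ω), below t.val (X2n ω)), X1n ω t))
      (fun z => ((z.2.1, below t.val z.2.2, above t.val z.2.2, z.1), z.2.2 t))
      (fun z => (z.1.2.2.2, (z.1.1, fun s =>
        if h1 : s.val < t.val then (z.1.2.1 s).getD (Classical.arbitrary X1)
        else if h2 : t.val < s.val then (z.1.2.2.1 s).getD (Classical.arbitrary X1)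
        else z.2)))
      (fun ω => rfl)
      (fun ω => by
        refine Prod.ext rfl (Prod.ext rfl ?_)
        funext s
        by_cases h1 : s.val < t.val
        · simp [below, h1]
        · by_cases h2 : t.val < s.val
          · simp [above, h1, h2]
          · have hst : s = t := Fin.ext (by omega)
            simp [h1, h2, hst])
end
end
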